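/- arXiv:2604.04666 — 5 statements merged into one kernel-verified Lean document; each statement's English description precedes it below -/
import Mathlib

section
/- For invertible elements q in a field and natural numbers m, define the Gaussian-type bracket [a; m]_q = ∏_{s=1}^{m} (a q^{1-s} - a⁻¹ q^{s-1})/(q^s - q^{-s}) for an invertible element a. If a and b are commuting invertible elements of an associative algebra over ℂ(q), then [ab; m]_q = ∑_{k=0}^{m} a^{m-k} b^{-k} [b; m-k]_q [a; k]_q. -/
noncomputable section

open scoped BigOperators

/-- The indeterminate `q`, as an element of the field `ℂ(q)` of rational functions. -/
def qq : RatFunc ℂ := RatFunc.X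

/-- The Gaussian-type bracket
`[a; m]_q = ∏_{s=1}^{m} (a q^{1-s} - a⁻¹ q^{s-1})/(q^s - q^{-s})`
for an invertible element `a` of an associative algebra over `ℂ(q)`
(the product is taken in the indicated order). -/
def qbr {A : Type*} [Ring A] [Algebra (RatFunc ℂ) A] (a : Aˣ) (m : ℕ) : A :=
  (((List.range m).map fun s =>
    (qq ^ ((s : ℤ) + 1) - qq ^ (-((s : ℤ) + 1)))⁻¹ •
      (qq ^ (-(s : ℤ)) • (a : A) - qq ^ ((s : ℤ)) • ((a⁻¹ : Aˣ) : A))).prod)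

/-!
Everything happens in the double centralizer of `{a, b}`: it is a commutative subalgebra, and it
contains `a`, `b` together with their inverses. In a commutative algebra the identity follows by
induction on `m`. Multiplying the `k`-th summand by the new factor of `[ab; m+1]_q`, the splitting
`q^{-(j+k)} ab - q^{j+k} a⁻¹b⁻¹ = q^{-k} a (q^{-j} b - q^j b⁻¹) + q^j b⁻¹ (q^{-k} a - q^k a⁻¹)`
turns it into a combination of the summands `k` and `k + 1` of level `m + 1`. Their coefficients
add up to `1` by the `q`-Pascal rule `{m + n} = q^{-n} {m} + q^m {n}`, where `{n} = q^n - q^{-n}`.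
-/

open Finset

theorem Finset.sum_range_succ_smul_add_smul {R M : Type*} [Semiring R] [AddCommMonoid M]
    [Module R M] (f : ℕ → M) (α β : ℕ → R) (m : ℕ) (h0 : α 0 = 1) (hm : β m = 1)
    (h : ∀ k < m, α (k + 1) + β k = 1) :
    ∑ k ∈ range (m + 1), (α k • f k + β k • f (k + 1)) = ∑ k ∈ range (m + 2), f k := by
  rw [sum_add_distrib, sum_range_succ', sum_range_succ, h0, hm, one_smul, one_smul,
    add_add_add_comm, ← sum_add_distrib, sum_range_succ, sum_range_succ' f, ← add_assoc]
  congr 2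
  refine sum_congr rfl fun k hk => ?_
  rw [← add_smul, h k (mem_range.1 hk), one_smul]

lemma Set.units_inv_mem_centralizer {M : Type*} [Monoid M] {S : Set M} {u : Mˣ}
    (hu : (u : M) ∈ S.centralizer) : ((u⁻¹ : Mˣ) : M) ∈ S.centralizer :=
  fun g hg => Commute.units_inv_right (hu g hg)

lemma Subalgebra.exists_units_map_val_eq {R A : Type*} [CommSemiring R] [Semiring A]
    [Algebra R A] (S : Subalgebra R A) {u : Aˣ} (hu : (u : A) ∈ S)
    (hu' : ((u⁻¹ : Aˣ) : A) ∈ S) : ∃ v : Sˣ, Units.map (S.val : S →* A) v = u :=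
  ⟨⟨⟨u, hu⟩, ⟨_, hu'⟩, Subtype.ext u.mul_inv, Subtype.ext u.inv_mul⟩, Units.ext rfl⟩

theorem RatFunc.intDegree_X_zpow {K : Type*} [Field K] (n : ℤ) :
    (RatFunc.X ^ n : RatFunc K).intDegree = n := by
  have hpow (k : ℕ) : (RatFunc.X ^ k : RatFunc K).intDegree = k := by
    simp [← RatFunc.algebraMap_X, ← map_pow, RatFunc.intDegree_polynomial]
  cases n with
  | ofNat k => exact hpow k
  | negSucc k => rw [zpow_negSucc, RatFunc.intDegree_inv, hpow, Int.negSucc_eq]; push_cast; ring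

lemma qq_ne_zero : qq ≠ 0 := RatFunc.X_ne_zero

/-- `qdiff n = (q - q⁻¹) [n]_q`; the denominators of `qbr` are the `qdiff (s + 1)`. -/
def qdiff (n : ℤ) : RatFunc ℂ := qq ^ n - qq ^ (-n)

lemma qdiff_ne_zero {n : ℤ} (hn : n ≠ 0) : qdiff n ≠ 0 := by
  refine sub_ne_zero.mpr fun h => hn ?_
  have := congrArg RatFunc.intDegree h
  simp only [qq, RatFunc.intDegree_X_zpow] at this
  omega

lemma qdiff_add (m n : ℤ) : qdiff (m + n) = qq ^ (-n) * qdiff m + qq ^ m * qdiff n := by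
  simp only [qdiff, mul_sub, ← zpow_add₀ qq_ne_zero]
  ring_nf

section Ring

variable {A : Type*} [Ring A] [Algebra (RatFunc ℂ) A]

def qnum (a : Aˣ) (s : ℤ) : A := qq ^ (-s) • (a : A) - qq ^ s • ((a⁻¹ : Aˣ) : A)

lemma qbr_succ (a : Aˣ) (m : ℕ) :
    qbr a (m + 1) = qbr a m * ((qdiff ((m : ℤ) + 1))⁻¹ • qnum a m) := by
  simp [qbr, List.range_succ, qdiff, qnum]

lemma map_qbr {B : Type*} [Ring B] [Algebra (RatFunc ℂ) B] (φ : A →ₐ[RatFunc ℂ] B) (a : Aˣ)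
    (m : ℕ) : φ (qbr a m) = qbr (Units.map (φ : A →* B) a) m := by
  simp [qbr, map_list_prod, Function.comp_def, ← map_inv]

def qbrTerm (a b : Aˣ) (j k : ℕ) : A :=
  (a : A) ^ j * ((b⁻¹ : Aˣ) : A) ^ k * qbr b j * qbr a k

lemma map_qbrTerm {B : Type*} [Ring B] [Algebra (RatFunc ℂ) B] (φ : A →ₐ[RatFunc ℂ] B)
    (a b : Aˣ) (j k : ℕ) :
    φ (qbrTerm a b j k) = qbrTerm (Units.map (φ : A →* B) a) (Units.map (φ : A →* B) b) j k := by
  simp [qbrTerm, map_qbr, ← map_inv]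

end Ring

section CommRing

variable {A : Type*} [CommRing A] [Algebra (RatFunc ℂ) A]

lemma qnum_mul (a b : Aˣ) (j k : ℤ) :
    qnum (a * b) (j + k) =
      qq ^ (-k) • ((a : A) * qnum b j) + qq ^ j • (((b⁻¹ : Aˣ) : A) * qnum a k) := by
  simp only [qnum, mul_inv, Units.val_mul, neg_add, zpow_add₀ qq_ne_zero, Algebra.smul_def,
    map_mul]
  ring

lemma qdiff_smul_qbrTerm_succ_left (a b : Aˣ) (j k : ℕ) :
    qdiff ((j : ℤ) + 1) • qbrTerm a b (j + 1) k = qbrTerm a b j k * ((a : A) * qnum b j) := by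
  have h : qdiff ((j : ℤ) + 1) ≠ 0 := qdiff_ne_zero (by omega)
  simp only [qbrTerm, qbr_succ, mul_smul_comm, smul_mul_assoc, smul_smul, mul_inv_cancel₀ h,
    one_smul]
  ring

lemma qdiff_smul_qbrTerm_succ_right (a b : Aˣ) (j k : ℕ) :
    qdiff ((k : ℤ) + 1) • qbrTerm a b j (k + 1) =
      qbrTerm a b j k * (((b⁻¹ : Aˣ) : A) * qnum a k) := by
  have h : qdiff ((k : ℤ) + 1) ≠ 0 := qdiff_ne_zero (by omega)
  simp only [qbrTerm, qbr_succ, mul_smul_comm, smul_smul, mul_inv_cancel₀ h, one_smul]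
  ring

lemma qbrTerm_mul_qnum (a b : Aˣ) (j k : ℕ) :
    qbrTerm a b j k * ((qdiff ((j : ℤ) + k + 1))⁻¹ • qnum (a * b) ((j : ℤ) + k)) =
      ((qdiff ((j : ℤ) + k + 1))⁻¹ * qq ^ (-(k : ℤ)) * qdiff ((j : ℤ) + 1)) •
          qbrTerm a b (j + 1) k +
        ((qdiff ((j : ℤ) + k + 1))⁻¹ * qq ^ (j : ℤ) * qdiff ((k : ℤ) + 1)) •
          qbrTerm a b j (k + 1) := by
  simp only [mul_smul, qdiff_smul_qbrTerm_succ_left, qdiff_smul_qbrTerm_succ_right, qnum_mul,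
    mul_smul_comm, ← smul_add, mul_add]

theorem qbr_mul_eq_sum_qbrTerm (a b : Aˣ) (m : ℕ) :
    qbr (a * b) m = ∑ k ∈ range (m + 1), qbrTerm a b (m - k) k := by
  induction m with
  | zero => simp [qbr, qbrTerm]
  | succ m ih =>
    set μ := qdiff ((m : ℤ) + 1)
    have hμ : μ ≠ 0 := qdiff_ne_zero (by omega)
    calc qbr (a * b) (m + 1)
        = ∑ k ∈ range (m + 1), qbrTerm a b (m - k) k * (μ⁻¹ • qnum (a * b) m) := by
          rw [qbr_succ, ih, sum_mul]
      _ = ∑ k ∈ range (m + 1),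
            ((μ⁻¹ * qq ^ (-(k : ℤ)) * qdiff ((m : ℤ) - k + 1)) • qbrTerm a b (m + 1 - k) k +
              (μ⁻¹ * qq ^ ((m : ℤ) - k) * qdiff ((k : ℤ) + 1)) •
                qbrTerm a b (m + 1 - (k + 1)) (k + 1)) := by
          refine sum_congr rfl fun k hk => ?_
          obtain ⟨j, rfl⟩ := Nat.exists_eq_add_of_le' (mem_range_succ_iff.1 hk)
          have := qbrTerm_mul_qnum a b j k
          push_cast [μ] at this ⊢
          simpa [show j + k + 1 - k = j + 1 by omega, add_right_comm] using this
      _ = ∑ k ∈ range (m + 2), qbrTerm a b (m + 1 - k) k := by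
          refine sum_range_succ_smul_add_smul _ _ _ m (by simpa using inv_mul_cancel₀ hμ)
            (by simpa using inv_mul_cancel₀ hμ) fun k hk => ?_
          have hpascal : qq ^ (-((k : ℤ) + 1)) * qdiff ((m : ℤ) - k) +
              qq ^ ((m : ℤ) - k) * qdiff ((k : ℤ) + 1) = μ := by
            rw [← qdiff_add]; congr 1; ring
          push_cast
          rw [sub_add_eq_sub_sub, sub_add_cancel, mul_assoc, mul_assoc, ← mul_add, hpascal,
            inv_mul_cancel₀ hμ]

end CommRing

/-- If `a` and `b` are commuting invertible elements of an associative algebra over `ℂ(q)`,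
then `[ab; m]_q = ∑_{k=0}^{m} a^{m-k} b^{-k} [b; m-k]_q [a; k]_q`. -/
theorem stmt0 {A : Type*} [Ring A] [Algebra (RatFunc ℂ) A] (a b : Aˣ)
    (hab : (a : A) * b = (b : A) * a) (m : ℕ) :
    qbr (a * b) m =
      ∑ k ∈ Finset.range (m + 1),
        (a : A) ^ (m - k) * ((b⁻¹ : Aˣ) : A) ^ k * qbr b (m - k) * qbr a k := by
  set T : Set A := {(a : A), (b : A)}
  have hT : ∀ x ∈ T, ∀ y ∈ T, x * y = y * x := by simp [T, hab]
  set S := Subalgebra.centralizer (RatFunc ℂ) T.centralizer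
  let _ : CommRing S := { (inferInstance : Ring S) with
    mul_comm := fun x y => Subtype.ext (Set.centralizer_centralizer_comm_of_comm hT _ x.2 _ y.2) }
  have hS : ∀ u : Aˣ, (u : A) ∈ T → ∃ v : Sˣ, Units.map (S.val : S →* A) v = u := fun u hu =>
    have hu : (u : A) ∈ S := Set.subset_centralizer_centralizer hu
    S.exists_units_map_val_eq hu (Set.units_inv_mem_centralizer hu)
  obtain ⟨a', ha⟩ := hS a (by simp [T])
  obtain ⟨b', hb⟩ := hS b (by simp [T])
  have h := congrArg S.val (qbr_mul_eq_sum_qbrTerm a' b' m)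
  simp only [map_qbr, map_sum, map_qbrTerm, map_mul, ha, hb] at h
  exact h
end
end

section
/- Let k ∈ ℤ₊ and let p⃗ = (p₁, ..., p_s) be a composition of k with all parts positive. Let σ ∈ S_k and suppose τ ∈ S_{(p₁, k-p₁)} (i.e., τ preserves the order inside the blocks [1,p₁] and [p₁+1,k]) with στ(p₁) = k, and τ' is a permutation preserving the order inside each block [p^1+1,p^2],...,[p^{s-1}+1,p^s] (where p^t = p₁+⋯+p_t) and fixing [1,p₁] pointwise, such that σττ' lies in S^{p⃗}. Then ττ' ∈ S_{p⃗} ∩ σ⁻¹S^{p⃗}. Conversely, every τ'' ∈ S_{p⃗} ∩ σ⁻¹S^{p⃗} admits a unique such factorization τ'' = ττ'. -/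
open scoped BigOperators

/-- Partial sums `p^t = p₁ + ⋯ + p_t` of a composition (0-indexed: `Ps p t = ∑_{u<t} p u`). -/
def Ps (p : ℕ → ℕ) (t : ℕ) : ℕ := ∑ u ∈ Finset.range t, p u

/-- `σ` is strictly increasing on the positions in `[lo, hi)`. -/
def IncOn {k : ℕ} (σ : Equiv.Perm (Fin k)) (lo hi : ℕ) : Prop :=
  ∀ i j : Fin k, lo ≤ (i : ℕ) → (j : ℕ) < hi → (i : ℕ) < (j : ℕ) →
    ((σ i : Fin k) : ℕ) < ((σ j : Fin k) : ℕ)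

/-- `σ ∈ S_{p⃗}`: increasing on each block `[p^{t-1}, p^t)`. -/
def SP {k : ℕ} (p : ℕ → ℕ) (s : ℕ) (σ : Equiv.Perm (Fin k)) : Prop :=
  ∀ t < s, IncOn σ (Ps p t) (Ps p (t + 1))

/-- `γ ∈ S^{p⃗}`: the images of the block maxima are decreasing, and each block maximum
has the largest image within its block. -/
def SUpper {k : ℕ} (p : ℕ → ℕ) (s : ℕ) (γ : Equiv.Perm (Fin k)) : Prop :=
  (∀ t : ℕ, t + 1 < s → ∀ i j : Fin k,
      (i : ℕ) + 1 = Ps p (t + 1) → (j : ℕ) + 1 = Ps p (t + 2) →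
      ((γ j : Fin k) : ℕ) < ((γ i : Fin k) : ℕ)) ∧
  (∀ t < s, ∀ u i : Fin k, (i : ℕ) + 1 = Ps p (t + 1) →
      Ps p t ≤ (u : ℕ) → (u : ℕ) < Ps p (t + 1) →
      ((γ u : Fin k) : ℕ) ≤ ((γ i : Fin k) : ℕ))

/-- `τ ∈ S_{(p₁, k-p₁)}`: increasing on `[0,p₁)` and on `[p₁,k)`. -/
def CondTau {k : ℕ} (p : ℕ → ℕ) (τ : Equiv.Perm (Fin k)) : Prop :=
  IncOn τ 0 (p 0) ∧ IncOn τ (p 0) k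

/-- `τ'` fixes the first block pointwise and is increasing on each of the blocks
`[p^1, p^2), …, [p^{s-1}, p^s)`. -/
def CondTau' {k : ℕ} (p : ℕ → ℕ) (s : ℕ) (τ' : Equiv.Perm (Fin k)) : Prop :=
  (∀ i : Fin k, (i : ℕ) < p 0 → τ' i = i) ∧
  (∀ t : ℕ, 1 ≤ t → t < s → IncOn τ' (Ps p t) (Ps p (t + 1)))

/-!
For the forward direction, `τ'` fixes `[1,p₁]` pointwise and therefore maps every later block
into `[p₁+1,k]`, where `τ` is increasing; so `ττ'` is increasing on every block.

For the converse, the factor `τ` must agree with `τ''` on the first block and be increasing on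
the rest, which determines it: it is `τ''π`, where `π` fixes `[1,p₁]` and sorts the positions
of `[p₁+1,k]` by their `τ''`-values. Then `τ' = π⁻¹`, and `π⁻¹` is increasing on the later
blocks because `τ''` is. Finally `στ(p₁) = στ''(p₁) = k`, since in `S^{p⃗}` the block maxima
have decreasing images and dominate their blocks, so `p₁` carries the largest value.
-/

open Equiv

variable {k : ℕ}

lemma Ps_zero (p : ℕ → ℕ) : Ps p 0 = 0 := by simp [Ps]

lemma Ps_one (p : ℕ → ℕ) : Ps p 1 = p 0 := by simp [Ps]

lemma Ps_mono (p : ℕ → ℕ) : Monotone (Ps p) := fun _ _ h =>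
  Finset.sum_le_sum_of_subset (Finset.range_subset_range.2 h)

lemma pos_of_Ps_eq {p : ℕ → ℕ} {s : ℕ} (hk : Ps p s = k) (i : Fin k) : 0 < s := by
  rcases Nat.eq_zero_or_pos s with rfl | hs
  · rw [Ps_zero] at hk
    exact absurd i.isLt (by omega)
  · exact hs

lemma le_apply_of_forall_lt_apply_eq {τ : Perm (Fin k)} {c : ℕ}
    (h : ∀ i : Fin k, (i : ℕ) < c → τ i = i) {a : Fin k} (ha : c ≤ a) : c ≤ (τ a : ℕ) := by
  by_contra hlt
  have : τ a = a := τ.injective (h _ (by omega))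
  omega

section IncOn

variable {τ τ' : Perm (Fin k)} {c lo hi : ℕ}

lemma IncOn.mul (hτ : IncOn τ c k) (hτ' : IncOn τ' lo hi)
    (hmaps : ∀ i : Fin k, lo ≤ i → c ≤ (τ' i : ℕ)) : IncOn (τ * τ') lo hi :=
  fun i j hli hjh hij => hτ _ _ (hmaps i hli) (τ' j).isLt (hτ' i j hli hjh hij)

lemma IncOn.of_mul (hτ : IncOn τ c k) (h : IncOn (τ * τ') lo hi)
    (hmaps : ∀ i : Fin k, lo ≤ i → c ≤ (τ' i : ℕ)) : IncOn τ' lo hi := by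
  intro i j hli hjh hij
  have hlt : (τ (τ' i) : ℕ) < τ (τ' j) := h i j hli hjh hij
  rcases lt_trichotomy (τ' i : ℕ) (τ' j) with hlt' | heq | hgt
  · exact hlt'
  · exact absurd (τ'.injective (Fin.ext heq)) (Fin.ne_of_lt hij)
  · have := hτ _ _ (hmaps j (by omega)) (τ' i).isLt hgt
    omega

end IncOn

section Rigidity

variable (f : Fin k → ℕ) {α β : Perm (Fin k)}

-- The position where `β` takes the value `α i` can lie neither before `i` nor after it.
lemma key_apply_le_of_eqOn_lt {i : Fin k} (hagree : ∀ j < i, α j = β j)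
    (hβ : ∀ j : Fin k, i < j → f (β i) < f (β j)) : f (β i) ≤ f (α i) := by
  by_contra hlt
  have hβj : β (β⁻¹ (α i)) = α i := β.apply_symm_apply (α i)
  rcases lt_trichotomy (β⁻¹ (α i)) i with hji | hji | hji
  · exact hji.ne (α.injective ((hagree _ hji).trans hβj))
  · rw [hji] at hβj
    rw [hβj] at hlt
    exact hlt (le_refl _)
  · have := hβ _ hji
    rw [hβj] at this
    omega

lemma apply_eq_of_eqOn_of_key_increasing (hf : Function.Injective f) {c d : ℕ}
    (hagree : ∀ i : Fin k, (i : ℕ) < c → α i = β i)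
    (hα : ∀ i j : Fin k, c ≤ i → (i : ℕ) < d → i < j → f (α i) < f (α j))
    (hβ : ∀ i j : Fin k, c ≤ i → (i : ℕ) < d → i < j → f (β i) < f (β j)) :
    ∀ i : Fin k, (i : ℕ) < d → α i = β i := by
  intro i
  induction i using WellFoundedLT.induction with
  | _ i ih =>
    intro hid
    by_cases hic : (i : ℕ) < c
    · exact hagree i hic
    have hbelow : ∀ j < i, α j = β j := fun j hj => ih j hj (by omega)
    exact hf (le_antisymm
      (key_apply_le_of_eqOn_lt f (fun j hj => (hbelow j hj).symm) (hα i · (by omega) hid))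
      (key_apply_le_of_eqOn_lt f hbelow (hβ i · (by omega) hid)))

end Rigidity

section TailSort

variable (c : ℕ) (τ : Perm (Fin k))

def tailKey (i : Fin k) : ℕ := if (i : ℕ) < c then i else c + τ i

/-- The permutation fixing `[0, c)` that sorts the positions of `[c, k)` by their `τ`-values. -/
def tailSort : Perm (Fin k) := Tuple.sort (tailKey c τ)

lemma tailKey_injective : Function.Injective (tailKey c τ) := by
  intro a b hab
  simp only [tailKey] at hab
  split_ifs at hab
  · exact Fin.ext hab
  · omega
  · omega
  · exact τ.injective (Fin.ext (by omega))

lemma strictMono_tailKey_comp_tailSort : StrictMono (tailKey c τ ∘ tailSort c τ) :=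
  (Tuple.monotone_sort _).strictMono_of_injective
    ((tailKey_injective c τ).comp (Tuple.sort _).injective)

lemma tailSort_apply_of_lt {i : Fin k} (hi : (i : ℕ) < c) : tailSort c τ i = i := by
  refine apply_eq_of_eqOn_of_key_increasing (tailKey c τ) (tailKey_injective c τ)
    (β := 1) (c := 0) (fun _ h => absurd h (Nat.not_lt_zero _))
    (fun i j _ _ hij => strictMono_tailKey_comp_tailSort c τ hij) ?_ i hi
  intro i j _ hic hij
  change tailKey c τ i < tailKey c τ j
  rw [tailKey, if_pos hic, tailKey]
  split_ifs <;> omega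

lemma incOn_mul_tailSort : IncOn (τ * tailSort c τ) c k := by
  intro i j hci _ hij
  have hmaps : ∀ a : Fin k, c ≤ a → c ≤ (tailSort c τ a : ℕ) :=
    fun _ => le_apply_of_forall_lt_apply_eq fun _ => tailSort_apply_of_lt c τ
  have := strictMono_tailKey_comp_tailSort c τ (show i < j from hij)
  simp only [Function.comp, tailKey, if_neg (not_lt.2 (hmaps i hci)),
    if_neg (not_lt.2 (hmaps j (by omega)))] at this
  simp only [Perm.mul_apply]
  omega

lemma mul_tailSort_eq_one {α α' : Perm (Fin k)} (hα : IncOn α c k)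
    (hα' : ∀ i : Fin k, (i : ℕ) < c → α' i = i) : α' * tailSort c (α * α') = 1 := by
  rw [← mul_eq_left (a := α), ← mul_assoc]
  ext i
  refine congrArg Fin.val (apply_eq_of_eqOn_of_key_increasing Fin.val Fin.val_injective
    (fun i hi => ?_) (fun i j hci _ hij => incOn_mul_tailSort c _ i j hci j.isLt hij)
    (fun i j hci _ hij => hα i j hci j.isLt hij) i i.isLt)
  rw [Perm.mul_apply, tailSort_apply_of_lt _ _ hi, Perm.mul_apply, hα' i hi]

end TailSort

section Blocks

variable {p : ℕ → ℕ} {s : ℕ}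

lemma SP_mul_of_condTau {τ τ' : Perm (Fin k)} (hτ : CondTau p τ) (hτ' : CondTau' p s τ') :
    SP p s (τ * τ') := by
  intro t ht
  rcases Nat.eq_zero_or_pos t with rfl | htpos
  · rw [Ps_zero, zero_add, Ps_one]
    intro i j _ hj hij
    simp only [Perm.mul_apply, hτ'.1 i (hij.trans hj), hτ'.1 j hj]
    exact hτ.1 i j (Nat.zero_le _) hj hij
  · have hp0 : p 0 ≤ Ps p t := Ps_one p ▸ Ps_mono p htpos
    exact hτ.2.mul (hτ'.2 t htpos ht) fun i hi =>
      le_apply_of_forall_lt_apply_eq hτ'.1 (hp0.trans hi)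

-- Each new block is dominated by its maximum, whose image is below that of the previous maximum.
lemma SUpper.apply_le_of_lt_Ps {γ : Perm (Fin k)} (hγ : SUpper p s γ) (hk : Ps p s = k)
    {i : Fin k} (hi : (i : ℕ) + 1 = p 0) :
    ∀ t < s, ∀ v : Fin k, (v : ℕ) < Ps p (t + 1) → (γ v : ℕ) ≤ γ i := by
  intro t
  induction t with
  | zero =>
    intro hs v hv
    exact hγ.2 0 hs v i (by rwa [Ps_one]) (by rw [Ps_zero]; exact Nat.zero_le _) hv
  | succ t ih =>
    intro ht v hv
    have hle : Ps p (t + 2) ≤ k := hk ▸ Ps_mono p ht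
    have htwo : Ps p (t + 1 + 1) = Ps p (t + 2) := rfl
    have hp0 : p 0 ≤ Ps p (t + 1) := Ps_one p ▸ Ps_mono p (by omega)
    by_cases hvt : (v : ℕ) < Ps p (t + 1)
    · exact ih (by omega) v hvt
    let m : Fin k := ⟨Ps p (t + 1) - 1, by omega⟩
    let m' : Fin k := ⟨Ps p (t + 2) - 1, by omega⟩
    have hv_le := hγ.2 (t + 1) ht v m' (by simp only [m']; omega) (by omega) hv
    have hm'_lt := hγ.1 t ht m m' (by simp only [m]; omega) (by simp only [m']; omega)
    have hm_le := ih (by omega) m (by simp only [m]; omega)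
    omega

lemma SUpper.apply_add_one_eq {γ : Perm (Fin k)} (hγ : SUpper p s γ) (hk : Ps p s = k)
    {i : Fin k} (hi : (i : ℕ) + 1 = p 0) : (γ i : ℕ) + 1 = k := by
  have hs := pos_of_Ps_eq hk i
  have := hγ.apply_le_of_lt_Ps hk hi (s - 1) (by omega) (γ.symm ⟨k - 1, by omega⟩)
    (by rw [Nat.sub_add_cancel hs, hk]; exact Fin.isLt _)
  rw [γ.apply_symm_apply, Fin.val_mk] at this
  omega

variable {τ'' : Perm (Fin k)}

lemma condTau_mul_tailSort (hSP : SP p s τ'') (hk : Ps p s = k) :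
    CondTau p (τ'' * tailSort (p 0) τ'') := by
  refine ⟨fun i j _ hj hij => ?_, incOn_mul_tailSort _ _⟩
  have hfirst := hSP 0 (pos_of_Ps_eq hk i)
  rw [Ps_zero, zero_add, Ps_one] at hfirst
  simp only [Perm.mul_apply, tailSort_apply_of_lt _ _ hj, tailSort_apply_of_lt _ _ (hij.trans hj)]
  exact hfirst i j (Nat.zero_le _) hj hij

lemma condTau'_inv_tailSort (hSP : SP p s τ'') : CondTau' p s (tailSort (p 0) τ'')⁻¹ := by
  have hfix : ∀ i : Fin k, (i : ℕ) < p 0 → (tailSort (p 0) τ'')⁻¹ i = i :=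
    fun i hi => Perm.inv_eq_iff_eq.2 (tailSort_apply_of_lt _ _ hi).symm
  refine ⟨hfix, fun t ht1 hts => (incOn_mul_tailSort (p 0) τ'').of_mul ?_ fun i hi =>
    le_apply_of_forall_lt_apply_eq hfix ((Ps_one p ▸ Ps_mono p ht1).trans hi)⟩
  simpa only [mul_inv_cancel_right] using hSP t hts

end Blocks

theorem stmt5_general (k s : ℕ) (p : ℕ → ℕ)
    (hsum : ∑ t ∈ Finset.range s, p t = k) (σ : Equiv.Perm (Fin k)) :
    (∀ τ τ' : Equiv.Perm (Fin k),
      CondTau p τ →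
      (∀ i : Fin k, (i : ℕ) + 1 = p 0 → (((σ * τ) i : Fin k) : ℕ) + 1 = k) →
      CondTau' p s τ' →
      SUpper p s (σ * (τ * τ')) →
      SP p s (τ * τ')) ∧
    (∀ τ'' : Equiv.Perm (Fin k), SP p s τ'' → SUpper p s (σ * τ'') →
      ∃! tp : Equiv.Perm (Fin k) × Equiv.Perm (Fin k),
        CondTau p tp.1 ∧
        (∀ i : Fin k, (i : ℕ) + 1 = p 0 → (((σ * tp.1) i : Fin k) : ℕ) + 1 = k) ∧
        CondTau' p s tp.2 ∧
        SUpper p s (σ * (tp.1 * tp.2)) ∧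
        τ'' = tp.1 * tp.2) := by
  refine ⟨fun τ τ' hτ _ hτ' _ => SP_mul_of_condTau hτ hτ', fun τ'' hSP hSU => ?_⟩
  refine ⟨(τ'' * tailSort (p 0) τ'', (tailSort (p 0) τ'')⁻¹),
    ⟨condTau_mul_tailSort hSP hsum, fun i hi => ?_, condTau'_inv_tailSort hSP,
      by simpa only [mul_inv_cancel_right] using hSU, by simp⟩, ?_⟩
  · have hfix := tailSort_apply_of_lt (p 0) τ'' (i := i) (by omega)
    simpa only [Perm.mul_apply, hfix] using hSU.apply_add_one_eq hsum hi
  · rintro ⟨α, α'⟩ ⟨hα, -, hα', -, rfl⟩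
    have h := mul_tailSort_eq_one (p 0) hα.2 hα'.1
    exact Prod.ext (by rw [mul_assoc, h, mul_one]) (eq_inv_of_mul_eq_one_left h)

/-- Let `p⃗ = (p₁,…,p_s)` be a composition of `k` with positive parts and `σ ∈ S_k`.
If `τ ∈ S_{(p₁,k-p₁)}` with `στ(p₁) = k`, and `τ'` fixes `[1,p₁]` pointwise and is
increasing on each block `[p^{t-1}+1, p^t]` (`t ≥ 2`), and `σττ' ∈ S^{p⃗}`, then
`ττ' ∈ S_{p⃗} ∩ σ⁻¹S^{p⃗}`.  Conversely every `τ'' ∈ S_{p⃗} ∩ σ⁻¹S^{p⃗}` admits a unique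
such factorization `τ'' = ττ'`. -/
theorem stmt5 (k s : ℕ) (hk : 0 < k) (p : ℕ → ℕ) (hp : ∀ t < s, 0 < p t)
    (hsum : ∑ t ∈ Finset.range s, p t = k) (σ : Equiv.Perm (Fin k)) :
    (∀ τ τ' : Equiv.Perm (Fin k),
      CondTau p τ →
      (∀ i : Fin k, (i : ℕ) + 1 = p 0 → (((σ * τ) i : Fin k) : ℕ) + 1 = k) →
      CondTau' p s τ' →
      SUpper p s (σ * (τ * τ')) →
      SP p s (τ * τ')) ∧
    (∀ τ'' : Equiv.Perm (Fin k), SP p s τ'' → SUpper p s (σ * τ'') →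
      ∃! tp : Equiv.Perm (Fin k) × Equiv.Perm (Fin k),
        CondTau p tp.1 ∧
        (∀ i : Fin k, (i : ℕ) + 1 = p 0 → (((σ * tp.1) i : Fin k) : ℕ) + 1 = k) ∧
        CondTau' p s tp.2 ∧
        SUpper p s (σ * (tp.1 * tp.2)) ∧
        τ'' = tp.1 * tp.2) :=
  stmt5_general k s p hsum σ
end

section
/- Let V be a nonlocal vertex algebra and u, v ∈ V. Suppose there exists N ∈ ℤ such that (z₁-z₂)^N Y(u,z₁)Y(v,z₂) ∈ Hom(V, V((z₁,z₂))). Then z^N Y(u,z)v ∈ V[[z]], and Y(u_{N-1}v, z) = lim_{z₁→z} (z₁-z)^N Y(u,z₁)Y(v,z), where u_{N-1}v is the (N-1)-th product determined by Y(u,z)v = ∑_n u_n v z^{-n-1}. -/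
noncomputable section

open scoped BigOperators

/-- A coefficientwise model of a nonlocal vertex algebra over `ℂ`:
`Yc n u v` is the coefficient `u_n v` of `z^{-n-1}` in `Y(u,z)v`.  The axioms are:
the field (truncation) property, the vacuum properties, compatibility (for each `u,v`
there is `k` with `(z₁-z₂)^k Y(u,z₁)Y(v,z₂) ∈ Hom(V,V((z₁,z₂)))`), and weak
associativity `(z₀+z₂)^k Y(u,z₀+z₂)Y(v,z₂)w = (z₀+z₂)^k Y(Y(u,z₀)v,z₂)w`,
all written out on coefficients. -/
structure NLVA (V : Type*) [AddCommGroup V] [Module ℂ V] where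
  Yc : ℤ → V →ₗ[ℂ] V →ₗ[ℂ] V
  vac : V
  trunc : ∀ u v : V, ∃ N : ℤ, ∀ n : ℤ, N ≤ n → Yc n u v = 0
  vac_left : ∀ (v : V) (n : ℤ), Yc n vac v = if n = -1 then v else 0
  vac_right : ∀ (u : V) (n : ℤ), 0 ≤ n → Yc n u vac = 0
  vac_create : ∀ u : V, Yc (-1) u vac = u
  compat : ∀ u v : V, ∃ k : ℕ, ∀ w : V, ∃ N : ℤ, ∀ a b : ℤ, (N ≤ a ∨ N ≤ b) →
    ∑ i ∈ Finset.range (k + 1),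
      ((-1 : ℤ) ^ (k - i) * (k.choose i : ℤ)) • Yc (a + i) u (Yc (b + (k : ℤ) - i) v w) = 0
  weak_assoc : ∀ u w : V, ∃ k : ℕ, (∀ n : ℤ, (k : ℤ) ≤ n → Yc n u w = 0) ∧
    ∀ (v : V) (a b : ℤ),
      ∑ᶠ j : ℕ, (Ring.choose (a + (j : ℤ)) j) •
          Yc ((k : ℤ) - 1 - a - j) u (Yc ((j : ℤ) - b - 1) v w)
        = ∑ i ∈ Finset.range (k + 1),
            ((k.choose i : ℤ)) • Yc ((k : ℤ) - i - 1 - b) (Yc ((i : ℤ) - 1 - a) u v) w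

/-!
Write `F(z₁,z₂) = (z₁-z₂)^N Y(u,z₁)Y(v,z₂)w`. Substituting `z₁ = z₀ + z₂` turns `(z₁-z₂)^N`
into `z₀^N`, so weak associativity of order `k` says that `z₀^N (z₀+z₂)^k Y(Y(u,z₀)v,z₂)w` equals
`(z₀+z₂)^k F(z₀+z₂,z₂)`. Weak associativity persists when `k` grows, so `k` may be taken larger
than the order of the pole of `F` in `z₁`; then the right side has no negative powers of `z₀`.
For `w = 𝟙`, descending induction on `n` with the creation property turns this into `uₙ v = 0`
for `n ≥ N`, and then the constant term in `z₀` is `z₂^k Y(u_{N-1}v,z₂)w = z₂^k F(z₂,z₂)`.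
-/

open Finset

theorem Ring.choose_add_self_eq_neg_one_pow_mul_choose (x : ℤ) (s : ℕ) :
    Ring.choose (x + s) s = (-1) ^ s * Ring.choose (-x - 1) s := by
  have h := Ring.choose_neg (x + 1) s
  rw [neg_add', add_sub_right_comm, add_sub_cancel_right, Units.smul_def,
    Int.coe_negOnePow_natCast, smul_eq_mul] at h
  rw [h, ← mul_assoc, ← pow_add, ← two_mul, pow_mul, neg_one_sq, one_pow, one_mul]

theorem Ring.choose_eq_zero_of_nonneg_of_lt {x : ℤ} {s : ℕ} (h₀ : 0 ≤ x) (h : x < s) :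
    Ring.choose x s = 0 := by
  lift x to ℕ using h₀
  rw [Ring.choose_natCast, Nat.choose_eq_zero_of_lt (by exact_mod_cast h), Nat.cast_zero]

/-- The coefficient of `xʲ` in `(1 - x)^(-α-1) (1 - x)^N = (1 - x)^(N-α-1)`. -/
theorem Ring.sum_antidiagonal_choose_add_mul_neg_one_pow_mul_choose (α N : ℤ) (j : ℕ) :
    ∑ p ∈ antidiagonal j, Ring.choose (α + p.1) p.1 * ((-1) ^ p.2 * Ring.choose N p.2) =
      Ring.choose (α - N + j) j := by
  have hterm : ∀ p ∈ antidiagonal j, Ring.choose (α + p.1) p.1 * ((-1) ^ p.2 * Ring.choose N p.2)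
      = (-1) ^ j * (Ring.choose (-α - 1) p.1 * Ring.choose N p.2) := by
    intro p hp
    rw [HasAntidiagonal.mem_antidiagonal] at hp
    rw [Ring.choose_add_self_eq_neg_one_pow_mul_choose, ← hp, pow_add]
    ring
  rw [sum_congr rfl hterm, ← mul_sum, ← Ring.add_choose_eq j (Commute.all _ _),
    Ring.choose_add_self_eq_neg_one_pow_mul_choose]
  ring_nf

theorem Int.forall_of_forall_ge_of_forall_gt_imp {P : ℤ → Prop} (S : ℤ)
    (hS : ∀ n, S ≤ n → P n) (step : ∀ n, (∀ m, n < m → P m) → P n) (n : ℤ) : P n := by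
  suffices h : ∀ n ≤ S, ∀ m, n ≤ m → P m from h (min n S) (min_le_right _ _) n (min_le_left _ _)
  intro n hn
  induction n, hn using Int.leInductionDown with
  | base => exact hS
  | pred n _ ih =>
    intro m hm
    rcases hm.lt_or_eq with hlt | rfl
    · exact ih m (by omega)
    · exact step _ fun m' hm' => ih m' (by omega)

section FinsumNat

variable {M : Type*}

theorem finsum_eq_sum_range_of_eq_zero [AddCommMonoid M] {f : ℕ → M} {n : ℕ}
    (hf : ∀ j, n ≤ j → f j = 0) :
    ∑ᶠ j, f j = ∑ j ∈ range n, f j :=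
  finsum_eq_finsetSum_of_support_subset f fun j hj =>
    mem_range.mpr (not_le.mp fun h => hj (hf j h))

theorem finsum_smul_finsum_add {R : Type*} [Semiring R] [AddCommMonoid M] [Module R M] (c d : ℕ → R)
    {g : ℕ → M} {n : ℕ} (hg : ∀ j, n ≤ j → g j = 0) :
    ∑ᶠ s, c s • ∑ᶠ i, d i • g (s + i) =
      ∑ᶠ j, (∑ p ∈ antidiagonal j, c p.1 * d p.2) • g j := by
  have hinner : ∀ s, ∑ᶠ i, d i • g (s + i) = ∑ i ∈ range (n - s), d i • g (s + i) := fun s =>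
    finsum_eq_sum_range_of_eq_zero fun i hi => by rw [hg _ (by omega), smul_zero]
  simp only [hinner]
  rw [finsum_eq_sum_range_of_eq_zero (n := n) fun s hs => by
      rw [Nat.sub_eq_zero_of_le hs, sum_range_zero, smul_zero],
    finsum_eq_sum_range_of_eq_zero (n := n) fun j hj => by rw [hg j hj, smul_zero]]
  simp only [Nat.sum_antidiagonal_eq_sum_range_succ_mk, sum_smul, smul_sum, smul_smul]
  rw [← sum_range_diag_flip n fun s i => (c s * d i) • g (s + i)]
  refine sum_congr rfl fun j _ => sum_congr rfl fun k hk => ?_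
  rw [Nat.add_sub_cancel' (Nat.lt_succ_iff.mp (mem_range.mp hk))]

theorem finsum_choose_add_smul [AddCommGroup M] (a : ℤ) {g : ℕ → M} {n : ℕ}
    (hg : ∀ j, n ≤ j → g j = 0) :
    ∑ᶠ j : ℕ, Ring.choose (a + j) j • g j =
      ∑ᶠ j : ℕ, Ring.choose (a - 1 + j) j • g j + ∑ᶠ j : ℕ, Ring.choose (a + j) j • g (j + 1) := by
  have hvan : ∀ b : ℤ, ∀ j, n + 1 ≤ j → Ring.choose (b + j) j • g j = 0 := fun b j hj => by
    rw [hg j (by omega), smul_zero]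
  rw [finsum_eq_sum_range_of_eq_zero (hvan a), finsum_eq_sum_range_of_eq_zero (hvan (a - 1)),
    finsum_eq_sum_range_of_eq_zero (n := n) fun j hj => by rw [hg _ (by omega), smul_zero],
    sum_range_succ', sum_range_succ', add_right_comm, ← sum_add_distrib]
  congr 1
  · refine sum_congr rfl fun j _ => ?_
    rw [← add_smul, add_comm (Ring.choose (a - 1 + _) _), Nat.cast_succ,
      show a - 1 + (j + 1 : ℤ) = a + j by ring, ← Ring.choose_succ_succ, add_assoc]
  · simp only [Nat.cast_zero, add_zero, Ring.choose_zero_right]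

theorem finsum_int_eq_finsum_nat_sub [AddCommMonoid M] {f : ℤ → M} {k : ℤ}
    (hf : ∀ a, k ≤ a → f a = 0) : ∑ᶠ a : ℤ, f a = ∑ᶠ s : ℕ, f (k - 1 - s) := by
  have hinj : Function.Injective fun s : ℕ => k - 1 - s := fun s t h => by simpa using h
  rw [← finsum_mem_range hinj, ← finsum_mem_univ]
  refine finsum_mem_inter_support_eq' f _ _ fun a ha => ?_
  simp only [Set.mem_univ, Set.mem_range, true_iff]
  have : a < k := not_le.mp fun h => ha (hf a h)
  exact ⟨(k - 1 - a).toNat, by omega⟩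

end FinsumNat

namespace NLVA

variable {V : Type*} [AddCommGroup V] [Module ℂ V] (A : NLVA V)

/-- The coefficient of `z₁^(-a-1) z₂^(-b-1)` in `(z₁-z₂)^N Y(u,z₁)Y(v,z₂)w`. -/
def prodCoeff (N : ℤ) (u v w : V) (a b : ℤ) : V :=
  ∑ᶠ i : ℕ, ((-1 : ℤ) ^ i * Ring.choose N i) • A.Yc (N - i + a) u (A.Yc (b + i) v w)

/-- The coefficient of `z₀^(-a-1) z₂^(-b-1)` in `(z₀+z₂)^k Y(u,z₀+z₂)Y(v,z₂)w`. -/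
def assocLhs (u v w : V) (k : ℕ) (a b : ℤ) : V :=
  ∑ᶠ j : ℕ, Ring.choose (a + (j : ℤ)) j •
    A.Yc ((k : ℤ) - 1 - a - j) u (A.Yc ((j : ℤ) - b - 1) v w)

/-- The coefficient of `z₀^(-a-1) z₂^(-b-1)` in `(z₀+z₂)^k Y(Y(u,z₀)v,z₂)w`. -/
def assocRhs (u v w : V) (k : ℕ) (a b : ℤ) : V :=
  ∑ i ∈ range (k + 1), (k.choose i : ℤ) • A.Yc ((k : ℤ) - i - 1 - b) (A.Yc ((i : ℤ) - 1 - a) u v) w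

def WeakAssocAt (u v w : V) (k : ℕ) : Prop :=
  ∀ a b : ℤ, A.assocLhs u v w k a b = A.assocRhs u v w k a b

variable {A}

theorem assocRhs_succ (u v w : V) (k : ℕ) (a b : ℤ) :
    A.assocRhs u v w (k + 1) a b = A.assocRhs u v w k (a - 1) b + A.assocRhs u v w k a (b - 1) := by
  rw [add_comm (A.assocRhs u v w k (a - 1) b)]
  simp only [assocRhs, Nat.cast_smul_eq_nsmul]
  have hle : ∀ {m i : ℕ}, i ∈ range (m + 1) → i ≤ m := fun hi =>
    Nat.lt_succ_iff.mp (mem_range.mp hi)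
  calc _ = ∑ i ∈ range (k + 2), (k + 1).choose i •
        A.Yc (((k + 1 - i : ℕ) : ℤ) - 1 - b) (A.Yc ((i : ℤ) - 1 - a) u v) w :=
        sum_congr rfl fun i hi => by rw [Nat.cast_sub (hle hi)]
    _ = _ := by
      rw [sum_choose_succ_nsmul (fun i j => A.Yc ((j : ℤ) - 1 - b) (A.Yc ((i : ℤ) - 1 - a) u v) w)]
      congr 1 <;> refine sum_congr rfl fun i hi => ?_
      · rw [Nat.cast_sub (Nat.le_succ_of_le (hle hi))]; push_cast; ring_nf
      · rw [Nat.cast_sub (hle hi)]; push_cast; ring_nf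

theorem assocLhs_succ (u v w : V) (k : ℕ) (a b : ℤ) :
    A.assocLhs u v w (k + 1) a b = A.assocLhs u v w k (a - 1) b + A.assocLhs u v w k a (b - 1) := by
  obtain ⟨T, hT⟩ := A.trunc v w
  convert finsum_choose_add_smul a
    (g := fun j : ℕ => A.Yc ((k : ℤ) - a - j) u (A.Yc ((j : ℤ) - b - 1) v w))
    (n := (T + b + 1).toNat) (fun j hj => by rw [hT _ (by omega), map_zero]) using 4
  all_goals exact finsum_congr fun j => by push_cast; ring_nf

theorem WeakAssocAt.succ {u v w : V} {k : ℕ} (h : A.WeakAssocAt u v w k) :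
    A.WeakAssocAt u v w (k + 1) := fun a b => by
  rw [assocLhs_succ, assocRhs_succ, h, h]

variable (A)

theorem exists_weakAssocAt_ge (u v w : V) (M : ℤ) : ∃ k : ℕ, M ≤ k ∧ A.WeakAssocAt u v w k := by
  obtain ⟨k₀, -, hk₀⟩ := A.weak_assoc u w
  have hk : ∀ d : ℕ, A.WeakAssocAt u v w (k₀ + d) := fun d => by
    induction d with
    | zero => exact hk₀ v
    | succ d ih => exact ih.succ
  exact ⟨k₀ + M.toNat, by omega, hk _⟩

/-- Substituting `z₁ = z₀ + z₂`, which turns `(z₁-z₂)^N` into `z₀^N`. -/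
theorem assocLhs_sub_eq_finsum_prodCoeff (N : ℤ) (u v w : V) (k : ℕ) (α β : ℤ) :
    A.assocLhs u v w k (α - N) β =
      ∑ᶠ s : ℕ, Ring.choose (α + s) s • A.prodCoeff N u v w (k - α - 1 - s) (s - β - 1) := by
  obtain ⟨T, hT⟩ := A.trunc v w
  set g : ℕ → V := fun j => A.Yc ((k : ℤ) - 1 - (α - N) - j) u (A.Yc ((j : ℤ) - β - 1) v w)
  have hg : ∀ j, (T + β + 1).toNat ≤ j → g j = 0 := fun j hj => by
    simp only [g]
    rw [hT _ (by omega), map_zero]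
  have hprod : ∀ s : ℕ, A.prodCoeff N u v w (k - α - 1 - s) (s - β - 1) =
      ∑ᶠ i : ℕ, ((-1 : ℤ) ^ i * Ring.choose N i) • g (s + i) := fun s =>
    finsum_congr fun i => by simp only [g]; push_cast; ring_nf
  simp only [hprod, finsum_smul_finsum_add _ _ hg,
    Ring.sum_antidiagonal_choose_add_mul_neg_one_pow_mul_choose]
  rfl

variable {A}

theorem assocLhs_sub_eq_zero {N : ℤ} {u v w : V} {k : ℕ}
    (hF : ∀ a b : ℤ, k ≤ a → A.prodCoeff N u v w a b = 0) {α : ℤ} (hα : α < 0) (β : ℤ) :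
    A.assocLhs u v w k (α - N) β = 0 := by
  rw [assocLhs_sub_eq_finsum_prodCoeff]
  refine finsum_eq_zero_of_forall_eq_zero fun s => ?_
  by_cases hs : α + s < 0
  · rw [hF _ _ (by omega), smul_zero]
  · rw [Ring.choose_eq_zero_of_nonneg_of_lt (by omega) (by omega), zero_smul]

theorem assocLhs_neg_eq_finsum_prodCoeff {N : ℤ} {u v w : V} {k : ℕ}
    (hF : ∀ a b : ℤ, k ≤ a → A.prodCoeff N u v w a b = 0) (β : ℤ) :
    A.assocLhs u v w k (-N) β = ∑ᶠ a : ℤ, A.prodCoeff N u v w a (k - a - β - 2) := by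
  rw [← zero_sub, assocLhs_sub_eq_finsum_prodCoeff,
    finsum_int_eq_finsum_nat_sub (k := k) fun a ha => hF _ _ ha]
  refine finsum_congr fun s => ?_
  rw [zero_add, Ring.choose_natCast, Nat.choose_self, Nat.cast_one, one_smul]
  ring_nf

theorem assocRhs_eq_of_forall_le {u v : V} {a : ℤ} (h : ∀ m, -a ≤ m → A.Yc m u v = 0)
    (w : V) (k : ℕ) (b : ℤ) :
    A.assocRhs u v w k a b = A.Yc (k - 1 - b) (A.Yc (-1 - a) u v) w := by
  rw [assocRhs, sum_range_succ', sum_eq_zero fun i _ => ?_, zero_add]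
  · simp only [Nat.choose_zero_right, Nat.cast_one, one_smul, Nat.cast_zero, sub_zero, zero_sub]
  · rw [h _ (by omega), map_zero, LinearMap.zero_apply, smul_zero]

variable (A)

theorem exists_weakAssocAt_prodCoeff_eq_zero {N : ℤ} {u v : V}
    (H : ∀ w : V, ∃ M : ℤ, ∀ a b, M ≤ a → A.prodCoeff N u v w a b = 0) (w : V) :
    ∃ k : ℕ, A.WeakAssocAt u v w k ∧ ∀ a b : ℤ, k ≤ a → A.prodCoeff N u v w a b = 0 := by
  obtain ⟨M, hM⟩ := H w
  obtain ⟨k, hMk, hk⟩ := A.exists_weakAssocAt_ge u v w M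
  exact ⟨k, hk, fun a b ha => hM a b (hMk.trans ha)⟩

theorem Yc_eq_zero_of_le {N : ℤ} {u v : V}
    (H : ∀ w : V, ∃ M : ℤ, ∀ a b, M ≤ a → A.prodCoeff N u v w a b = 0) (n : ℤ) (hn : N ≤ n) :
    A.Yc n u v = 0 := by
  obtain ⟨k, hk, hF⟩ := A.exists_weakAssocAt_prodCoeff_eq_zero H A.vac
  obtain ⟨S, hS⟩ := A.trunc u v
  refine Int.forall_of_forall_ge_of_forall_gt_imp (P := fun n => N ≤ n → A.Yc n u v = 0) S
    (fun n hSn _ => hS n hSn) (fun n ih hn => ?_) n hn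
  calc A.Yc n u v = A.Yc (-1) (A.Yc n u v) A.vac := (A.vac_create _).symm
    _ = A.assocRhs u v A.vac k ((N - 1 - n) - N) k := by
      rw [assocRhs_eq_of_forall_le fun m hm => ih m (by omega) (by omega)]
      ring_nf
    _ = 0 := by rw [← hk, assocLhs_sub_eq_zero hF (by omega)]

theorem Yc_Yc_eq_finsum_prodCoeff {N : ℤ} {u v : V}
    (H : ∀ w : V, ∃ M : ℤ, ∀ a b, M ≤ a → A.prodCoeff N u v w a b = 0) (w : V) (c : ℤ) :
    A.Yc c (A.Yc (N - 1) u v) w = ∑ᶠ a : ℤ, A.prodCoeff N u v w a (c - 1 - a) := by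
  obtain ⟨k, hk, hF⟩ := A.exists_weakAssocAt_prodCoeff_eq_zero H w
  calc A.Yc c (A.Yc (N - 1) u v) w = A.assocRhs u v w k (-N) (k - 1 - c) := by
        rw [assocRhs_eq_of_forall_le fun m hm => A.Yc_eq_zero_of_le H m (by omega)]
        ring_nf
    _ = ∑ᶠ a : ℤ, A.prodCoeff N u v w a (k - a - (k - 1 - c) - 2) := by
        rw [← hk, assocLhs_neg_eq_finsum_prodCoeff hF]
    _ = _ := finsum_congr fun a => by ring_nf

end NLVA

/-- Let `V` be a nonlocal vertex algebra and `u, v ∈ V`.  Suppose there is `N ∈ ℤ` with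
`(z₁-z₂)^N Y(u,z₁)Y(v,z₂) ∈ Hom(V, V((z₁,z₂)))` (here `(z₁-z₂)^N` is expanded in the
domain `|z₁|>|z₂|`, with coefficients the generalized binomial coefficients).  Then
`z^N Y(u,z)v ∈ V[[z]]` (i.e. `u_n v = 0` for `n ≥ N`), and
`Y(u_{N-1}v, z) = lim_{z₁→z} (z₁-z)^N Y(u,z₁)Y(v,z)`, coefficientwise. -/
theorem stmt16 {V : Type*} [AddCommGroup V] [Module ℂ V] (A : NLVA V) (u v : V) (N : ℤ)
    (H : ∀ w : V, ∃ M : ℤ, ∀ a b : ℤ, (M ≤ a ∨ M ≤ b) →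
      ∑ᶠ i : ℕ, ((-1 : ℤ) ^ i * Ring.choose N i) • A.Yc (N - i + a) u (A.Yc (b + i) v w) = 0) :
    (∀ n : ℤ, N ≤ n → A.Yc n u v = 0) ∧
    (∀ (w : V) (c : ℤ),
      A.Yc c (A.Yc (N - 1) u v) w
        = ∑ᶠ a : ℤ, ∑ᶠ i : ℕ,
            ((-1 : ℤ) ^ i * Ring.choose N i) • A.Yc (N - i + a) u (A.Yc ((c - 1 - a) + i) v w)) := by
  have H' : ∀ w : V, ∃ M : ℤ, ∀ a b, M ≤ a → A.prodCoeff N u v w a b = 0 := fun w =>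
    (H w).imp fun _ hM a b ha => hM a b (Or.inl ha)
  exact ⟨A.Yc_eq_zero_of_le H', A.Yc_Yc_eq_finsum_prodCoeff H'⟩
end
end

section
/- Let W be a vector space, φ(x,z) = x e^z, and let a(z), b(z) ∈ E(W) form a quasi-compatible pair with f(z₁,z₂)a(z₁)b(z₂) ∈ E^{(2)}(W) for some nonzero polynomial f. Suppose α⁺(z), α⁻(z), β(z) ∈ E(W) satisfy: [α^±(z₁), α^±(z₂)] = 0, α⁺(z) ∈ Hom(W, W[[z]]), and [α⁻(z₁), β(z₂)] = β(z₂)·ι_{z₁,z₂}f(z₁,z₂) for some rational function f(z₁,z₂) ∈ ℂ(z₁,z₂). Then, with α(z) = α⁻(z) + α⁺(z), the (-1)-st φ-product satisfies α(z)_{-1}^φ β(z) = α⁺(z)β(z) + β(z)α⁻(z) + β(z)·Res_{z₀} z₀⁻¹ ι_{z,z₀} f(φ(z,z₀), z). -/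
noncomputable section

open scoped BigOperators

variable {W : Type*} [AddCommGroup W] [Module ℂ W]

/-- The coefficient of `z^a z₀^c` in the substitution `z₁ ↦ z e^{z₀}`, `z₂ ↦ z` of a
two-variable polynomial (or series) `h(z₁,z₂) = ∑ h i j z₁^i z₂^j`. -/
def substCoeff (h : ℤ → ℤ → ℂ) (a : ℤ) (c : ℕ) : ℂ :=
  ∑ᶠ i : ℤ, h i (a - i) * ((i : ℂ) ^ c / (c.factorial : ℂ))

/-- The coefficient of `z₁^a z₂^b` in `h(z₁,z₂)·α(z₁)β(z₂)` applied to `w`, where the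
fields are written as `α(z) = ∑ α e z^e`, `β(z) = ∑ β e z^e`. -/
def prodCoeff (h : ℤ → ℤ → ℂ) (α β : ℤ → Module.End ℂ W) (a b : ℤ) (w : W) : W :=
  ∑ᶠ (i : ℤ) (j : ℤ), h i j • α (a - i) (β (b - j) w)


/-!
The commutation relation splits `α(z₁)β(z₂) = N(z₁,z₂) + β(z₂) ι_{z₁,z₂}f(z₁,z₂)`, where
`N = α⁺(z₁)β(z₂) + β(z₂)α⁻(z₁)` is lower truncated in both variables; hence `h` times the second
summand also lies in `E^{(2)}(W)`. On such series the substitution `z₁ = ze^{z₀}, z₂ = z` is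
multiplicative, so `h(ze^{z₀},z)⁻¹` cancels `h` on the `N`-part, which contributes
`α⁺(z)β(z) + β(z)α⁻(z)` at `z₀⁰`. On the second part, `q · ι f = p` shows that both
`h(ze^{z₀},z)⁻¹ (h β ι f)(ze^{z₀},z)` and `f(ze^{z₀},z) β(z)` solve
`q(ze^{z₀},z) X = p(ze^{z₀},z) β(z)`. Since `q(ze^{z₀},z) ≠ 0` (distinct exponentials `e^{iz₀}`
are linearly independent) and nonzero elements of `ℂ((z))[[z₀]]` are not zero divisors on
`W((z))[[z₀]]` (compare lowest terms), the two agree.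
-/

open Function Finset

section LaurentConvolution

lemma hasFiniteSupport_of_mem_Icc {M : Type*} [AddCommMonoid M] {f : ℤ → M} (A B : ℤ)
    (h : ∀ x, f x ≠ 0 → A ≤ x ∧ x ≤ B) : HasFiniteSupport f :=
  (Set.finite_Icc A B).subset h

lemma finsum_comm_of_mem_Icc {M : Type*} [AddCommMonoid M] (f : ℤ → ℤ → M) (A B C D : ℤ)
    (h : ∀ x y, f x y ≠ 0 → (A ≤ x ∧ x ≤ B) ∧ (C ≤ y ∧ y ≤ D)) :
    ∑ᶠ x, ∑ᶠ y, f x y = ∑ᶠ y, ∑ᶠ x, f x y := by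
  have h₁ : ∀ x, ∑ᶠ y, f x y = ∑ y ∈ Icc C D, f x y := fun x =>
    finsum_eq_sum_of_support_subset _ fun y hy => by simpa using (h x y hy).2
  have h₂ : ∀ y, ∑ᶠ x, f x y = ∑ x ∈ Icc A B, f x y := fun y =>
    finsum_eq_sum_of_support_subset _ fun x hx => by simpa using (h x y hx).1
  simp only [h₁, h₂]
  rw [finsum_eq_sum_of_support_subset _ (s := Icc A B),
    finsum_eq_sum_of_support_subset _ (s := Icc C D),
    Finset.sum_comm]
  · intro y hy
    obtain ⟨x, -, hx⟩ := Finset.exists_ne_zero_of_sum_ne_zero hy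
    simpa using (h x y hx).2
  · intro x hx
    obtain ⟨y, -, hy⟩ := Finset.exists_ne_zero_of_sum_ne_zero hx
    simpa using (h x y hy).1

lemma finsum_comp_sub_left {M : Type*} [AddCommMonoid M] (f : ℤ → ℤ → M) (x : ℤ) :
    ∑ᶠ t, f t (x - t) = ∑ᶠ e, f (x - e) e := by
  rw [← finsum_comp_equiv (Equiv.subLeft x)]
  simp only [Equiv.subLeft_apply, sub_sub_cancel]

lemma le_and_le_of_smul_ne_zero {f : ℤ → ℂ} {g : ℤ → W} {Nf Ng : ℤ}
    (hf : ∀ x < Nf, f x = 0) (hg : ∀ y < Ng, g y = 0) {x y : ℤ} (h : f x • g y ≠ 0) :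
    Nf ≤ x ∧ Ng ≤ y :=
  ⟨not_lt.1 fun hx => h (by rw [hf x hx, zero_smul]),
    not_lt.1 fun hy => h (by rw [hg y hy, smul_zero])⟩

def laurentConv (f : ℤ → ℂ) (g : ℤ → W) (a : ℤ) : W :=
  ∑ᶠ x, f x • g (a - x)

variable {f : ℤ → ℂ} {g : ℤ → W} {Nf Ng : ℤ}

lemma hasFiniteSupport_laurentConv (hf : ∀ x < Nf, f x = 0) (hg : ∀ y < Ng, g y = 0) (a : ℤ) :
    HasFiniteSupport fun x => f x • g (a - x) :=
  hasFiniteSupport_of_mem_Icc Nf (a - Ng) fun x hx => by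
    have := le_and_le_of_smul_ne_zero hf hg hx
    omega

lemma laurentConv_eq_zero_of_lt (hf : ∀ x < Nf, f x = 0) (hg : ∀ y < Ng, g y = 0) {a : ℤ}
    (ha : a < Nf + Ng) : laurentConv f g a = 0 :=
  finsum_eq_zero_of_forall_eq_zero fun x => by
    by_contra hx
    have := le_and_le_of_smul_ne_zero hf hg hx
    omega

lemma laurentConv_add_right {g' : ℤ → W} {Ng' : ℤ} (hf : ∀ x < Nf, f x = 0)
    (hg : ∀ y < Ng, g y = 0) (hg' : ∀ y < Ng', g' y = 0) (a : ℤ) :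
    laurentConv f (g + g') a = laurentConv f g a + laurentConv f g' a := by
  simp only [laurentConv, Pi.add_apply, smul_add]
  exact finsum_add_distrib (hasFiniteSupport_laurentConv hf hg a)
    (hasFiniteSupport_laurentConv hf hg' a)

lemma laurentConv_sum_right {ι : Type*} (s : Finset ι) (g : ι → ℤ → W)
    (hf : ∀ x < Nf, f x = 0) (hg : ∀ i ∈ s, ∀ y < Ng, g i y = 0) (a : ℤ) :
    laurentConv f (fun y => ∑ i ∈ s, g i y) a = ∑ i ∈ s, laurentConv f (g i) a := by
  simp only [laurentConv, Finset.smul_sum]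
  exact finsum_sum_comm s _ fun i hi => hasFiniteSupport_laurentConv hf (hg i hi) a

lemma laurentConv_sum_left {ι : Type*} (s : Finset ι) (f : ι → ℤ → ℂ)
    (hf : ∀ i ∈ s, ∀ x < Nf, f i x = 0) (hg : ∀ y < Ng, g y = 0) (a : ℤ) :
    laurentConv (fun x => ∑ i ∈ s, f i x) g a = ∑ i ∈ s, laurentConv (f i) g a := by
  simp only [laurentConv, Finset.sum_smul]
  exact finsum_sum_comm s _ fun i hi => hasFiniteSupport_laurentConv (hf i hi) hg a

lemma laurentConv_comm (f g : ℤ → ℂ) (a : ℤ) : laurentConv f g a = laurentConv g f a := by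
  rw [laurentConv, finsum_comp_sub_left (fun x y => f x • g y)]
  exact finsum_congr fun x => mul_comm _ _

lemma laurentConv_assoc {f g : ℤ → ℂ} {h : ℤ → W} {Nh : ℤ} (hf : ∀ x < Nf, f x = 0)
    (hg : ∀ y < Ng, g y = 0) (hh : ∀ z < Nh, h z = 0) (a : ℤ) :
    laurentConv f (laurentConv g h) a = laurentConv (laurentConv f g) h a := by
  have hL : ∀ x, f x • laurentConv g h (a - x) = ∑ᶠ y, (f x * g y) • h (a - x - y) := fun x => by
    rw [laurentConv, smul_finsum' _ (hasFiniteSupport_laurentConv hg hh _)]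
    simp only [smul_smul]
  have hR : ∀ s, laurentConv f g s • h (a - s) = ∑ᶠ x, (f x * g (s - x)) • h (a - s) := fun s => by
    rw [laurentConv, finsum_smul' (hasFiniteSupport_laurentConv hf hg s)]
    simp only [smul_eq_mul]
  simp only [laurentConv] at hL hR ⊢
  rw [finsum_congr hL, finsum_congr hR,
    finsum_comm_of_mem_Icc (fun s x => (f x * g (s - x)) • h (a - s)) (Nf + Ng) (a - Nh) Nf
      (a - Ng - Nh)]
  · refine finsum_congr fun x => ?_
    conv_rhs => rw [← finsum_comp_equiv (Equiv.addLeft x)]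
    simp only [Equiv.coe_addLeft, add_sub_cancel_left, sub_add_eq_sub_sub]
  · intro s x hsx
    have hx : Nf ≤ x := not_lt.1 fun h' => hsx (by rw [hf x h', zero_mul, zero_smul])
    have hy : Ng ≤ s - x := not_lt.1 fun h' => hsx (by rw [hg _ h', mul_zero, zero_smul])
    have hz : Nh ≤ a - s := not_lt.1 fun h' => hsx (by rw [hh _ h', smul_zero])
    omega

end LaurentConvolution

section TruncatedSeries

/-- `F a c` is the coefficient of `z^a z₀^c` of an element of `W((z))[[z₀]]`. -/
def IsLowerTruncated {M : Type*} [Zero M] (F : ℤ → ℕ → M) : Prop :=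
  ∀ c, ∃ N : ℤ, ∀ a < N, F a c = 0

/-- The product in `ℂ((z))[[z₀]]` acting on `W((z))[[z₀]]`. -/
def seriesMul (F : ℤ → ℕ → ℂ) (G : ℤ → ℕ → W) (a : ℤ) (c : ℕ) : W :=
  ∑ c' ∈ range (c + 1), ∑ᶠ a' : ℤ, F a' c' • G (a - a') (c - c')

def seriesOne : ℤ → ℕ → ℂ := fun a c => if a = 0 ∧ c = 0 then 1 else 0

lemma seriesMul_eq_sum_laurentConv (F : ℤ → ℕ → ℂ) (G : ℤ → ℕ → W) (a : ℤ) (c : ℕ) :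
    seriesMul F G a c =
      ∑ c' ∈ range (c + 1), laurentConv (fun x => F x c') (fun x => G x (c - c')) a :=
  rfl

namespace IsLowerTruncated

lemma uniform {M : Type*} [Zero M] {F : ℤ → ℕ → M} (hF : IsLowerTruncated F) (c : ℕ) :
    ∃ N : ℤ, ∀ c' ≤ c, ∀ a < N, F a c' = 0 := by
  induction c with
  | zero => simpa using hF 0
  | succ c ih =>
    obtain ⟨N₁, hN₁⟩ := ih
    obtain ⟨N₂, hN₂⟩ := hF (c + 1)
    refine ⟨min N₁ N₂, fun c' hc' a ha => ?_⟩
    rcases Nat.lt_or_eq_of_le hc' with hc' | rfl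
    · exact hN₁ c' (Nat.lt_succ_iff.1 hc') a (lt_min_iff.1 ha).1
    · exact hN₂ a (lt_min_iff.1 ha).2

lemma sub {M : Type*} [AddGroup M] {F G : ℤ → ℕ → M} (hF : IsLowerTruncated F)
    (hG : IsLowerTruncated G) : IsLowerTruncated (F - G) :=
  fun c => by
    obtain ⟨N₁, h₁⟩ := hF c
    obtain ⟨N₂, h₂⟩ := hG c
    exact ⟨min N₁ N₂, fun a ha => by
      simp [h₁ a (lt_min_iff.1 ha).1, h₂ a (lt_min_iff.1 ha).2]⟩

lemma seriesMul {F : ℤ → ℕ → ℂ} {G : ℤ → ℕ → W} (hF : IsLowerTruncated F)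
    (hG : IsLowerTruncated G) : IsLowerTruncated (seriesMul F G) := fun c => by
  obtain ⟨NF, hNF⟩ := hF.uniform c
  obtain ⟨NG, hNG⟩ := hG.uniform c
  refine ⟨NF + NG, fun a ha => Finset.sum_eq_zero fun c' hc' => ?_⟩
  have hc' := Nat.lt_succ_iff.1 (mem_range.1 hc')
  exact laurentConv_eq_zero_of_lt (hNF c' hc') (hNG _ (Nat.sub_le c c')) ha

lemma exists_leading {M : Type*} [Zero M] {F : ℤ → ℕ → M} (hF : IsLowerTruncated F)
    (hF0 : F ≠ 0) :
    ∃ a₀ c₀, F a₀ c₀ ≠ 0 ∧ (∀ a, ∀ c < c₀, F a c = 0) ∧ ∀ a < a₀, F a c₀ = 0 := by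
  classical
  have hex : ∃ c, ∃ a, F a c ≠ 0 := by
    by_contra! h
    exact hF0 (funext fun a => funext fun c => h c a)
  obtain ⟨a₁, ha₁⟩ := Nat.find_spec hex
  obtain ⟨N, hN⟩ := hF (Nat.find hex)
  obtain ⟨a₀, ha₀, ha₀min⟩ := Int.exists_least_of_bdd (P := fun a => F a (Nat.find hex) ≠ 0)
    ⟨N, fun a ha => not_lt.1 fun h => ha (hN a h)⟩ ⟨a₁, ha₁⟩
  refine ⟨a₀, Nat.find hex, ha₀, fun a c hc => ?_, fun a ha => ?_⟩
  · by_contra h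
    exact Nat.find_min hex hc ⟨a, h⟩
  · by_contra h
    exact absurd (ha₀min a h) (not_le.2 ha)

end IsLowerTruncated

lemma seriesMul_add {F : ℤ → ℕ → ℂ} {G H : ℤ → ℕ → W} (hF : IsLowerTruncated F)
    (hG : IsLowerTruncated G) (hH : IsLowerTruncated H) :
    seriesMul F (G + H) = seriesMul F G + seriesMul F H := by
  funext a c
  obtain ⟨NF, hNF⟩ := hF.uniform c
  obtain ⟨NG, hNG⟩ := hG.uniform c
  obtain ⟨NH, hNH⟩ := hH.uniform c
  simp only [seriesMul_eq_sum_laurentConv, Pi.add_apply, ← Finset.sum_add_distrib]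
  refine Finset.sum_congr rfl fun c' hc' => ?_
  have hc' := Nat.lt_succ_iff.1 (mem_range.1 hc')
  exact laurentConv_add_right (g := fun x => G x (c - c')) (g' := fun x => H x (c - c'))
    (hNF c' hc') (hNG _ (Nat.sub_le c c')) (hNH _ (Nat.sub_le c c')) a

lemma seriesMul_sub {F : ℤ → ℕ → ℂ} {G H : ℤ → ℕ → W} (hF : IsLowerTruncated F)
    (hG : IsLowerTruncated G) (hH : IsLowerTruncated H) :
    seriesMul F (G - H) = seriesMul F G - seriesMul F H := by
  rw [eq_sub_iff_add_eq, ← seriesMul_add hF (hG.sub hH) hH, sub_add_cancel]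

lemma Finset.sum_range_triangle_comm {M : Type*} [AddCommMonoid M] (c : ℕ)
    (f : ℕ → ℕ → M) :
    ∑ c' ∈ range (c + 1), ∑ c₁ ∈ range (c' + 1), f c' c₁ =
      ∑ c₁ ∈ range (c + 1), ∑ c₂ ∈ range (c - c₁ + 1), f (c₁ + c₂) c₁ := by
  have h := Finset.sum_Ico_Ico_comm 0 (c + 1) (fun c₁ c' => f c' c₁)
  simp only [← Finset.range_eq_Ico] at h
  rw [← h]
  refine Finset.sum_congr rfl fun c₁ hc₁ => ?_
  rw [Finset.sum_Ico_eq_sum_range, show c + 1 - c₁ = c - c₁ + 1 by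
    have := mem_range.1 hc₁; omega]

lemma seriesMul_assoc {F G : ℤ → ℕ → ℂ} {H : ℤ → ℕ → W} (hF : IsLowerTruncated F)
    (hG : IsLowerTruncated G) (hH : IsLowerTruncated H) :
    seriesMul F (seriesMul G H) = seriesMul (seriesMul F G) H := by
  funext a c
  obtain ⟨NF, hNF⟩ := hF.uniform c
  obtain ⟨NG, hNG⟩ := hG.uniform c
  obtain ⟨NH, hNH⟩ := hH.uniform c
  have hle {c₁ c₂ : ℕ} (h : c₁ ∈ range (c₂ + 1)) : c₁ ≤ c₂ := Nat.lt_succ_iff.1 (mem_range.1 h)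
  simp only [seriesMul_eq_sum_laurentConv]
  have hL : ∀ c₁ ∈ range (c + 1),
      laurentConv (fun x => F x c₁)
          (fun x => ∑ c₂ ∈ range (c - c₁ + 1),
            laurentConv (fun y => G y c₂) (fun y => H y (c - c₁ - c₂)) x) a =
        ∑ c₂ ∈ range (c - c₁ + 1), laurentConv (fun x => F x c₁)
          (laurentConv (fun y => G y c₂) (fun y => H y (c - c₁ - c₂))) a := fun c₁ hc₁ =>
    laurentConv_sum_right _ _ (hNF c₁ (hle hc₁)) (fun c₂ hc₂ x hx => laurentConv_eq_zero_of_lt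
      (hNG c₂ ((hle hc₂).trans (Nat.sub_le _ _))) (hNH _ (by omega)) hx) a
  have hR : ∀ c' ∈ range (c + 1),
      laurentConv (fun x => ∑ c₁ ∈ range (c' + 1),
            laurentConv (fun y => F y c₁) (fun y => G y (c' - c₁)) x) (fun x => H x (c - c')) a =
        ∑ c₁ ∈ range (c' + 1), laurentConv
          (laurentConv (fun y => F y c₁) (fun y => G y (c' - c₁))) (fun x => H x (c - c')) a :=
    fun c' hc' => laurentConv_sum_left _ _ (fun c₁ hc₁ x hx => laurentConv_eq_zero_of_lt
      (hNF c₁ ((hle hc₁).trans (hle hc'))) (hNG _ (by have := hle hc'; omega)) hx)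
      (hNH _ (Nat.sub_le _ _)) a
  rw [Finset.sum_congr rfl hL, Finset.sum_congr rfl hR, Finset.sum_range_triangle_comm]
  refine Finset.sum_congr rfl fun c₁ hc₁ => Finset.sum_congr rfl fun c₂ hc₂ => ?_
  have hc₁ := hle hc₁
  have hc₂ := hle hc₂
  rw [laurentConv_assoc (hNF c₁ hc₁) (hNG c₂ (by omega)) (hNH _ (by omega)),
    Nat.add_sub_cancel_left, Nat.sub_sub]

lemma seriesMul_comm (F G : ℤ → ℕ → ℂ) : seriesMul F G = seriesMul G F := by
  funext a c
  simp only [seriesMul_eq_sum_laurentConv]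
  rw [← Finset.sum_range_reflect]
  refine Finset.sum_congr rfl fun c' hc' => ?_
  have hc' := mem_range.1 hc'
  rw [laurentConv_comm, show c + 1 - 1 - c' = c - c' by omega,
    show c - (c - c') = c' by omega]

lemma seriesOne_seriesMul (G : ℤ → ℕ → W) : seriesMul seriesOne G = G := by
  funext a c
  rw [seriesMul, Finset.sum_eq_single_of_mem 0 (mem_range.2 c.succ_pos),
    finsum_eq_single _ (0 : ℤ)]
  · simp [seriesOne]
  · intro a' ha'
    simp [seriesOne, ha']
  · intro c' _ hc'
    exact finsum_eq_zero_of_forall_eq_zero fun a' => by simp [seriesOne, hc']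

lemma seriesMul_leading {F : ℤ → ℕ → ℂ} {Z : ℤ → ℕ → W} {a₀ b₀ : ℤ} {c₀ d₀ : ℕ}
    (hFc : ∀ a, ∀ c < c₀, F a c = 0) (hFa : ∀ a < a₀, F a c₀ = 0)
    (hZc : ∀ b, ∀ d < d₀, Z b d = 0) (hZb : ∀ b < b₀, Z b d₀ = 0) :
    seriesMul F Z (a₀ + b₀) (c₀ + d₀) = F a₀ c₀ • Z b₀ d₀ := by
  rw [seriesMul, Finset.sum_eq_single_of_mem c₀ (mem_range.2 (by omega)),
    Nat.add_sub_cancel_left, finsum_eq_single _ a₀, add_sub_cancel_left]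
  · intro a' ha'
    rcases lt_or_gt_of_ne ha' with h | h
    · rw [hFa a' h, zero_smul]
    · rw [hZb _ (by omega), smul_zero]
  · intro c' hc' hne
    refine finsum_eq_zero_of_forall_eq_zero fun a' => ?_
    rcases lt_or_gt_of_ne hne with h | h
    · rw [hFc a' c' h, zero_smul]
    · rw [hZc _ _ (by have := mem_range.1 hc'; omega), smul_zero]

lemma eq_zero_of_seriesMul_eq_zero {F : ℤ → ℕ → ℂ} {Z : ℤ → ℕ → W}
    (hF : IsLowerTruncated F) (hF0 : F ≠ 0) (hZ : IsLowerTruncated Z)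
    (h : seriesMul F Z = 0) : Z = 0 := by
  by_contra hZ0
  obtain ⟨a₀, c₀, hF₀, hFc, hFa⟩ := hF.exists_leading hF0
  obtain ⟨b₀, d₀, hZ₀, hZc, hZb⟩ := hZ.exists_leading hZ0
  have := seriesMul_leading hFc hFa hZc hZb
  rw [h] at this
  exact smul_ne_zero hF₀ hZ₀ this.symm

lemma seriesMul_left_cancel {F : ℤ → ℕ → ℂ} {Y Z : ℤ → ℕ → W}
    (hF : IsLowerTruncated F) (hF0 : F ≠ 0) (hY : IsLowerTruncated Y) (hZ : IsLowerTruncated Z)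
    (h : seriesMul F Y = seriesMul F Z) : Y = Z :=
  sub_eq_zero.1 <| eq_zero_of_seriesMul_eq_zero hF hF0 (hY.sub hZ) <| by
    rw [seriesMul_sub hF hY hZ, h, sub_self]

end TruncatedSeries

section Substitution

/-- `G a b` is the coefficient of `z₁^a z₂^b`. -/
def IsLowerTruncated₂ {M : Type*} [Zero M] (G : ℤ → ℤ → M) : Prop :=
  ∃ N : ℤ, ∀ a b : ℤ, (a < N ∨ b < N) → G a b = 0

/-- Multiplication by the polynomial `F(z₁,z₂) = ∑ F i j z₁^i z₂^j`. -/
def polyMul (F : ℤ → ℤ → ℂ) (G : ℤ → ℤ → W) (a b : ℤ) : W :=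
  ∑ᶠ (i : ℤ) (j : ℤ), F i j • G (a - i) (b - j)

/-- The coefficient of `z₀^c` in `e^{t z₀}`. -/
def expCoeff (c : ℕ) (t : ℤ) : ℂ :=
  (t : ℂ) ^ c / c.factorial

/-- The coefficient of `z^x z₀^c` in `G(z e^{z₀}, z)`. -/
def substExp (G : ℤ → ℤ → W) (x : ℤ) (c : ℕ) : W :=
  ∑ᶠ t : ℤ, expCoeff c t • G t (x - t)

lemma expCoeff_zero_left (t : ℤ) : expCoeff 0 t = 1 := by
  simp [expCoeff]

lemma expCoeff_add (c : ℕ) (x y : ℤ) :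
    expCoeff c (x + y) = ∑ k ∈ range (c + 1), expCoeff k x * expCoeff (c - k) y := by
  rw [expCoeff, Int.cast_add, add_pow, Finset.sum_div]
  refine Finset.sum_congr rfl fun k hk => ?_
  rw [Nat.cast_choose ℂ (Nat.lt_succ_iff.1 (mem_range.1 hk))]
  have := Nat.cast_ne_zero (R := ℂ).2 c.factorial_ne_zero
  simp only [expCoeff]
  field_simp

lemma substCoeff_eq_substExp (F : ℤ → ℤ → ℂ) : substCoeff F = substExp F :=
  funext fun _ => funext fun _ => finsum_congr fun _ => mul_comm _ _

lemma substExp_zero (G : ℤ → ℤ → W) (x : ℤ) : substExp G x 0 = ∑ᶠ t, G t (x - t) := by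
  simp [substExp, expCoeff_zero_left]

namespace IsLowerTruncated₂

lemma add {M : Type*} [AddZeroClass M] {G H : ℤ → ℤ → M} (hG : IsLowerTruncated₂ G)
    (hH : IsLowerTruncated₂ H) : IsLowerTruncated₂ (G + H) := by
  obtain ⟨N₁, h₁⟩ := hG
  obtain ⟨N₂, h₂⟩ := hH
  exact ⟨min N₁ N₂, fun a b hab => by
    simp only [Pi.add_apply, h₁ a b (by omega), h₂ a b (by omega), add_zero]⟩

lemma sub {M : Type*} [AddGroup M] {G H : ℤ → ℤ → M} (hG : IsLowerTruncated₂ G)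
    (hH : IsLowerTruncated₂ H) : IsLowerTruncated₂ (G - H) := by
  obtain ⟨N₁, h₁⟩ := hG
  obtain ⟨N₂, h₂⟩ := hH
  exact ⟨min N₁ N₂, fun a b hab => by
    simp only [Pi.sub_apply, h₁ a b (by omega), h₂ a b (by omega), sub_zero]⟩

lemma hasFiniteSupport {G : ℤ → ℤ → W} (hG : IsLowerTruncated₂ G) (f : ℤ → ℂ) (x : ℤ) :
    HasFiniteSupport fun t => f t • G t (x - t) := by
  obtain ⟨N, hN⟩ := hG
  refine hasFiniteSupport_of_mem_Icc N (x - N) fun t ht => ?_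
  by_contra h
  exact ht (by rw [hN t (x - t) (by omega), smul_zero])

lemma hasFiniteSupport_shift {G : ℤ → ℤ → W} (hG : IsLowerTruncated₂ G) (f : ℤ → ℂ)
    (i j x : ℤ) : HasFiniteSupport fun t => f t • G (t - i) (x - t - j) := by
  obtain ⟨N, hN⟩ := hG
  refine hasFiniteSupport_of_mem_Icc (N + i) (x - j - N) fun t ht => ?_
  by_contra h
  exact ht (by rw [hN _ _ (by omega), smul_zero])

lemma finsum_expCoeff_smul_shift {G : ℤ → ℤ → W} (hG : IsLowerTruncated₂ G) (i j x : ℤ)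
    (c : ℕ) : ∑ᶠ t, expCoeff c t • G (t - i) (x - t - j) =
      ∑ k ∈ range (c + 1), expCoeff k i • substExp G (x - i - j) (c - k) := by
  rw [← finsum_comp_equiv (Equiv.addLeft i)]
  simp only [Equiv.coe_addLeft, add_sub_cancel_left, expCoeff_add, Finset.sum_smul,
    show ∀ u, x - (i + u) - j = x - i - j - u from fun u => by ring]
  rw [finsum_sum_comm _ _ fun k _ => hG.hasFiniteSupport _ _]
  refine Finset.sum_congr rfl fun k _ => ?_
  rw [substExp, smul_finsum' _ (hG.hasFiniteSupport _ _)]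
  simp only [mul_smul]

lemma polyMul {F : ℤ → ℤ → ℂ} {G : ℤ → ℤ → W} (hFnn : ∀ i j, (i < 0 ∨ j < 0) → F i j = 0)
    (hG : IsLowerTruncated₂ G) : IsLowerTruncated₂ (polyMul F G) := by
  obtain ⟨N, hN⟩ := hG
  refine ⟨N, fun a b hab => finsum_eq_zero_of_forall_eq_zero fun i =>
    finsum_eq_zero_of_forall_eq_zero fun j => ?_⟩
  by_cases hij : i < 0 ∨ j < 0
  · rw [hFnn i j hij, zero_smul]
  · rw [hN _ _ (by omega), smul_zero]

lemma substExp {G : ℤ → ℤ → W} (hG : IsLowerTruncated₂ G) :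
    IsLowerTruncated (substExp G) := by
  obtain ⟨N, hN⟩ := hG
  exact fun c => ⟨N + N, fun x hx => finsum_eq_zero_of_forall_eq_zero fun t => by
    rw [hN t (x - t) (by omega), smul_zero]⟩

end IsLowerTruncated₂

lemma isLowerTruncated_substCoeff {F : ℤ → ℤ → ℂ}
    (hFnn : ∀ i j, (i < 0 ∨ j < 0) → F i j = 0) : IsLowerTruncated (substCoeff F) := by
  rw [substCoeff_eq_substExp]
  exact IsLowerTruncated₂.substExp ⟨0, hFnn⟩

lemma substExp_add {G H : ℤ → ℤ → W} (hG : IsLowerTruncated₂ G) (hH : IsLowerTruncated₂ H) :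
    substExp (G + H) = substExp G + substExp H := by
  funext x c
  simp only [substExp, Pi.add_apply, smul_add]
  exact finsum_add_distrib (hG.hasFiniteSupport _ x) (hH.hasFiniteSupport _ x)

variable {F : ℤ → ℤ → ℂ} (hF : (support fun p : ℤ × ℤ => F p.1 p.2).Finite)
include hF

lemma polyMul_eq_sum (G : ℤ → ℤ → W) (a b : ℤ) :
    polyMul F G a b = ∑ p ∈ hF.toFinset, F p.1 p.2 • G (a - p.1) (b - p.2) := by
  have hsupp : (support fun p : ℤ × ℤ => F p.1 p.2 • G (a - p.1) (b - p.2)) ⊆ hF.toFinset :=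
    fun p hp => by simpa using left_ne_zero_of_smul hp
  rw [polyMul, ← finsum_curry _ (hF.toFinset.finite_toSet.subset hsupp)]
  exact finsum_eq_sum_of_support_subset _ hsupp

lemma polyMul_add (G H : ℤ → ℤ → W) : polyMul F (G + H) = polyMul F G + polyMul F H := by
  funext a b
  simp only [polyMul_eq_sum hF, Pi.add_apply, smul_add, Finset.sum_add_distrib]

lemma polyMul_left_comm {F' : ℤ → ℤ → ℂ} (hF' : (support fun p : ℤ × ℤ => F' p.1 p.2).Finite)
    (G : ℤ → ℤ → W) : polyMul F (polyMul F' G) = polyMul F' (polyMul F G) := by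
  funext a b
  simp only [polyMul_eq_sum hF, polyMul_eq_sum hF', Finset.smul_sum, smul_smul]
  rw [Finset.sum_comm]
  refine Finset.sum_congr rfl fun p' _ => Finset.sum_congr rfl fun p _ => ?_
  rw [mul_comm, sub_right_comm a, sub_right_comm b]

lemma substExp_polyMul_eq_sum {G : ℤ → ℤ → W} (hG : IsLowerTruncated₂ G) (x : ℤ) (c : ℕ) :
    substExp (polyMul F G) x c = ∑ p ∈ hF.toFinset, F p.1 p.2 •
      ∑ k ∈ range (c + 1), expCoeff k p.1 • substExp G (x - p.1 - p.2) (c - k) := by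
  have hterm : ∀ t, expCoeff c t • polyMul F G t (x - t) =
      ∑ p ∈ hF.toFinset, F p.1 p.2 • expCoeff c t • G (t - p.1) (x - t - p.2) := fun t => by
    simp only [polyMul_eq_sum hF, Finset.smul_sum, smul_comm (expCoeff c t)]
  rw [substExp, finsum_congr hterm, finsum_sum_comm hF.toFinset
    (fun t p => F p.1 p.2 • expCoeff c t • G (t - p.1) (x - t - p.2))
    fun p _ => (hG.hasFiniteSupport_shift _ _ _ _).smul_right _]
  refine Finset.sum_congr rfl fun p _ => ?_
  rw [← smul_finsum' _ (hG.hasFiniteSupport_shift _ _ _ _), hG.finsum_expCoeff_smul_shift]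

lemma substCoeff_eq_sum (a : ℤ) (k : ℕ) :
    substCoeff F a k =
      ∑ p ∈ hF.toFinset, if p.1 + p.2 = a then F p.1 p.2 * expCoeff k p.1 else 0 := by
  have hsupp : (support fun p : ℤ × ℤ =>
      if p.1 + p.2 = a then F p.1 p.2 * expCoeff k p.1 else 0) ⊆ hF.toFinset := fun p hp => by
    simp only [mem_support, ne_eq, ite_eq_right_iff, Classical.not_imp] at hp
    simpa using left_ne_zero_of_mul hp.2
  rw [← finsum_eq_sum_of_support_subset _ hsupp,
    finsum_curry _ (hF.toFinset.finite_toSet.subset hsupp), substCoeff]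
  refine finsum_congr fun i => ?_
  rw [finsum_eq_single _ (a - i) fun j hj => if_neg (by omega), if_pos (by omega), expCoeff]

lemma seriesMul_substCoeff_eq_sum (H : ℤ → ℕ → W) (x : ℤ) (c : ℕ) :
    seriesMul (substCoeff F) H x c = ∑ p ∈ hF.toFinset, F p.1 p.2 •
      ∑ k ∈ range (c + 1), expCoeff k p.1 • H (x - p.1 - p.2) (c - k) := by
  have hk : ∀ k, ∑ᶠ a, substCoeff F a k • H (x - a) (c - k) =
      ∑ p ∈ hF.toFinset, (F p.1 p.2 * expCoeff k p.1) • H (x - p.1 - p.2) (c - k) := fun k => by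
    simp only [substCoeff_eq_sum hF, Finset.sum_smul]
    rw [finsum_sum_comm]
    · refine Finset.sum_congr rfl fun p _ => ?_
      rw [finsum_eq_single _ (p.1 + p.2) fun a ha => by rw [if_neg (Ne.symm ha), zero_smul],
        if_pos rfl, sub_add_eq_sub_sub]
    · intro p _
      refine (Set.finite_singleton (p.1 + p.2)).subset fun a ha => ?_
      by_contra h
      exact ha (by simp only [if_neg (Ne.symm (Set.mem_singleton_iff.not.1 h)), zero_smul])
  rw [seriesMul, Finset.sum_congr rfl fun k _ => hk k, Finset.sum_comm]
  simp only [Finset.smul_sum, smul_smul]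

lemma substExp_polyMul {G : ℤ → ℤ → W} (hG : IsLowerTruncated₂ G) :
    substExp (polyMul F G) = seriesMul (substCoeff F) (substExp G) :=
  funext fun x => funext fun c => by
    rw [substExp_polyMul_eq_sum hF hG, seriesMul_substCoeff_eq_sum hF]

end Substitution

lemma eq_zero_of_forall_sum_mul_pow_eq_zero {K ι : Type*} [Field K] {s : Finset ι} {v : ι → K}
    (hv : Set.InjOn v s) {g : ι → K} (h : ∀ k : ℕ, ∑ i ∈ s, g i * v i ^ k = 0) {i₀ : ι}
    (hi₀ : i₀ ∈ s) : g i₀ = 0 := by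
  classical
  -- pair `g` with the polynomial vanishing at every `v i` except `v i₀`
  let Ψ : Polynomial K := ∏ j ∈ s.erase i₀, (Polynomial.X - Polynomial.C (v j))
  have hsum : ∑ i ∈ s, g i * Ψ.eval (v i) = 0 := by
    simp only [Polynomial.eval_eq_sum_range, Finset.mul_sum]
    rw [Finset.sum_comm]
    refine Finset.sum_eq_zero fun k _ => ?_
    simp only [mul_left_comm (g _), ← Finset.mul_sum, h k, mul_zero]
  have hsingle : ∑ i ∈ s, g i * Ψ.eval (v i) = g i₀ * Ψ.eval (v i₀) :=
    Finset.sum_eq_single_of_mem i₀ hi₀ fun i hi hne => by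
      rw [Polynomial.eval_prod, Finset.prod_eq_zero (mem_erase.2 ⟨hne, hi⟩) (by simp), mul_zero]
  have hΨ : Ψ.eval (v i₀) ≠ 0 := by
    rw [Polynomial.eval_prod, Finset.prod_ne_zero_iff]
    intro j hj
    rw [Polynomial.eval_sub, Polynomial.eval_X, Polynomial.eval_C, sub_ne_zero]
    exact fun hj' => (mem_erase.1 hj).1 (hv (mem_erase.1 hj).2 hi₀ hj'.symm)
  exact (mul_eq_zero.1 (hsingle ▸ hsum)).resolve_right hΨ

lemma substCoeff_ne_zero {F : ℤ → ℤ → ℂ} (hF : (support fun p : ℤ × ℤ => F p.1 p.2).Finite)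
    (hF0 : ∃ i j, F i j ≠ 0) : substCoeff F ≠ 0 := by
  obtain ⟨i₀, j₀, hij⟩ := hF0
  intro h
  have hpow : ∀ k : ℕ, ∑ i ∈ hF.toFinset.image Prod.fst, F i (i₀ + j₀ - i) * (i : ℂ) ^ k = 0 := by
    intro k
    have hk := congrFun (congrFun h (i₀ + j₀)) k
    rw [substCoeff, finsum_eq_sum_of_support_subset _ (s := hF.toFinset.image Prod.fst)
      fun i hi => by simpa using ⟨_, left_ne_zero_of_mul hi⟩] at hk
    simp only [Pi.zero_apply, mul_div_assoc', ← Finset.sum_div, div_eq_zero_iff, Nat.cast_eq_zero,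
      Nat.factorial_ne_zero, or_false] at hk
    exact hk
  refine hij ?_
  have := eq_zero_of_forall_sum_mul_pow_eq_zero Int.cast_injective.injOn hpow
    (Finset.mem_image.2 ⟨(i₀, j₀), by simpa using hij, rfl⟩)
  rwa [add_sub_cancel_left] at this

section Inversion

variable {h : ℤ → ℤ → ℂ} (hh : (support fun p : ℤ × ℤ => h p.1 p.2).Finite)
  (hhnn : ∀ i j, (i < 0 ∨ j < 0) → h i j = 0) {Hinv : ℤ → ℕ → ℂ}
  (hHinv : IsLowerTruncated Hinv) (hinv : seriesMul Hinv (substCoeff h) = seriesOne)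
include hh hhnn hHinv hinv

lemma seriesMul_substExp_polyMul_of_inv {G : ℤ → ℤ → W} (hG : IsLowerTruncated₂ G) :
    seriesMul Hinv (substExp (polyMul h G)) = substExp G := by
  rw [substExp_polyMul hh hG, seriesMul_assoc hHinv (isLowerTruncated_substCoeff hhnn)
    hG.substExp, hinv, seriesOne_seriesMul]

/-- With `f = p/q` and `Fφ = f(ze^{z₀},z)`: if `qG = pE`, then
`h(ze^{z₀},z)⁻¹ (hG)(ze^{z₀},z) = f(ze^{z₀},z) E(ze^{z₀},z)`. Both sides become
`p(ze^{z₀},z) E(ze^{z₀},z)` after multiplication by `q(ze^{z₀},z)`, which is nonzero and can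
therefore be cancelled. -/
lemma seriesMul_substExp_polyMul_eq_of_polyMul_eq {p q : ℤ → ℤ → ℂ}
    (hp : (support fun x : ℤ × ℤ => p x.1 x.2).Finite) (hpnn : ∀ i j, (i < 0 ∨ j < 0) → p i j = 0)
    (hq : (support fun x : ℤ × ℤ => q x.1 x.2).Finite) (hqnn : ∀ i j, (i < 0 ∨ j < 0) → q i j = 0)
    (hq0 : ∃ i j, q i j ≠ 0) {Fφ : ℤ → ℕ → ℂ} (hFφ : IsLowerTruncated Fφ)
    (hqFφ : seriesMul (substCoeff q) Fφ = substCoeff p) {G E : ℤ → ℤ → W}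
    (hhG : IsLowerTruncated₂ (polyMul h G)) (hE : IsLowerTruncated₂ E)
    (hGE : polyMul q G = polyMul p E) :
    seriesMul Hinv (substExp (polyMul h G)) = seriesMul Fφ (substExp E) := by
  have hqs := isLowerTruncated_substCoeff hqnn
  refine seriesMul_left_cancel hqs (substCoeff_ne_zero hq hq0) (hHinv.seriesMul hhG.substExp)
    (hFφ.seriesMul hE.substExp) ?_
  calc seriesMul (substCoeff q) (seriesMul Hinv (substExp (polyMul h G)))
      = seriesMul Hinv (seriesMul (substCoeff q) (substExp (polyMul h G))) := by
        rw [seriesMul_assoc hqs hHinv hhG.substExp, seriesMul_comm (substCoeff q),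
          seriesMul_assoc hHinv hqs hhG.substExp]
    _ = seriesMul Hinv (substExp (polyMul h (polyMul p E))) := by
        rw [← substExp_polyMul hq hhG, polyMul_left_comm hq hh, hGE]
    _ = seriesMul (substCoeff q) (seriesMul Fφ (substExp E)) := by
        rw [seriesMul_substExp_polyMul_of_inv hh hhnn hHinv hinv (hE.polyMul hpnn),
          substExp_polyMul hp hE, seriesMul_assoc hqs hFφ hE.substExp, hqFφ]

end Inversion

section Fields

/-- The normally ordered product `α⁺(z₁)β(z₂) + β(z₂)α⁻(z₁)`, applied to `w`. -/
def normalOrdered (αp αm β : ℤ → Module.End ℂ W) (w : W) : ℤ → ℤ → W :=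
  (fun a b => αp a (β b w)) + fun a b => β b (αm a w)

/-- The coefficients of `F(z₁,z₂) v(z₂)`. -/
def mulSnd (F : ℤ → ℤ → ℂ) (v : ℤ → W) (a b : ℤ) : W :=
  ∑ᶠ e, F a (b - e) • v e

def embedSnd {M : Type*} [Zero M] (v : ℤ → M) (a b : ℤ) : M :=
  if a = 0 then v b else 0

lemma prodCoeff_eq_polyMul (αp : ℤ → Module.End ℂ W) {αm β : ℤ → Module.End ℂ W} {Fι : ℤ → ℤ → ℂ}
    (hrel : ∀ (e₁ e₂ : ℤ) (w : W),
      αm e₁ (β e₂ w) - β e₂ (αm e₁ w) = ∑ᶠ e : ℤ, Fι e₁ (e₂ - e) • β e w)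
    (h : ℤ → ℤ → ℂ) (w : W) :
    (fun a b => prodCoeff h (fun e => αp e + αm e) β a b w) =
      polyMul h (normalOrdered αp αm β w + mulSnd Fι fun e => β e w) := by
  funext a b
  refine finsum_congr fun i => finsum_congr fun j => congrArg (h i j • ·) ?_
  simp only [normalOrdered, mulSnd, Pi.add_apply, LinearMap.add_apply, ← hrel]
  abel

lemma isLowerTruncated₂_embedSnd {M : Type*} [Zero M] {v : ℤ → M} {N : ℤ}
    (hv : ∀ e < N, v e = 0) : IsLowerTruncated₂ (embedSnd v) :=
  ⟨min 0 N, fun a b hab => by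
    unfold embedSnd
    split_ifs with ha
    · exact hv b (by omega)
    · rfl⟩

lemma mulSnd_eq_zero_of_lt {F : ℤ → ℤ → ℂ} {v : ℤ → W} {N Nv : ℤ}
    (hF : ∀ a b, b < N → F a b = 0) (hv : ∀ e < Nv, v e = 0) {a b : ℤ} (hb : b < N + Nv) :
    mulSnd F v a b = 0 :=
  finsum_eq_zero_of_forall_eq_zero fun e => by
    by_cases he : e < Nv
    · rw [hv e he, smul_zero]
    · rw [hF a _ (by omega), zero_smul]

lemma polyMul_embedSnd (F : ℤ → ℤ → ℂ) (v : ℤ → W) : polyMul F (embedSnd v) = mulSnd F v := by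
  funext a b
  rw [polyMul, finsum_eq_single _ a fun i hi => finsum_eq_zero_of_forall_eq_zero fun j => by
    rw [embedSnd, if_neg (sub_ne_zero.2 (Ne.symm hi)), smul_zero], mulSnd,
    ← finsum_comp_equiv (Equiv.subLeft b)]
  simp [embedSnd]

lemma polyMul_mulSnd {F G : ℤ → ℤ → ℂ} (hF : (support fun p : ℤ × ℤ => F p.1 p.2).Finite)
    {v : ℤ → W} {N Nv : ℤ} (hG : ∀ a b, b < N → G a b = 0) (hv : ∀ e < Nv, v e = 0) :
    polyMul F (mulSnd G v) = mulSnd (polyMul F G) v := by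
  funext a b
  have hfin : ∀ x y, HasFiniteSupport fun e => G x (y - e) • v e := fun x y =>
    hasFiniteSupport_of_mem_Icc Nv (y - N) fun e he =>
      ⟨not_lt.1 fun h' => he (by rw [hv e h', smul_zero]),
        not_lt.1 fun h' => he (by rw [hG x _ (by omega), zero_smul])⟩
  have hterm : ∀ e, polyMul F G a (b - e) • v e =
      ∑ p ∈ hF.toFinset, F p.1 p.2 • G (a - p.1) (b - p.2 - e) • v e := fun e => by
    simp only [polyMul_eq_sum hF, Finset.sum_smul, smul_assoc, sub_right_comm b e]
  rw [polyMul_eq_sum hF, mulSnd, finsum_congr hterm, finsum_sum_comm hF.toFinset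
    (fun e p => F p.1 p.2 • G (a - p.1) (b - p.2 - e) • v e) fun p _ => (hfin _ _).smul_right _]
  exact Finset.sum_congr rfl fun p _ => by rw [mulSnd, smul_finsum' _ (hfin _ _)]

lemma isLowerTruncated₂_apply_apply {A B : ℤ → Module.End ℂ W} {w : W} {NA NB : ℤ}
    (hA : ∀ e < NA, A e = 0) (hB : ∀ e < NB, B e w = 0) :
    IsLowerTruncated₂ fun a b => A a (B b w) :=
  ⟨min NA NB, fun a b hab => by
    dsimp only
    rcases hab with h | h
    · rw [hA a (by omega), LinearMap.zero_apply]
    · rw [hB b (by omega), map_zero]⟩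

/-- `β(z₂)α⁻(z₁)w = α⁻(z₁)β(z₂)w - β(z₂) ι f(z₁,z₂) w`, and in `z₂` both terms are lower
truncated. -/
lemma isLowerTruncated₂_apply_apply_of_commutator {αm β : ℤ → Module.End ℂ W}
    {Fι : ℤ → ℤ → ℂ} (hrel : ∀ (e₁ e₂ : ℤ) (w : W),
      αm e₁ (β e₂ w) - β e₂ (αm e₁ w) = ∑ᶠ e : ℤ, Fι e₁ (e₂ - e) • β e w)
    {w : W} {Nm Nβ N : ℤ} (hαm : ∀ e < Nm, αm e w = 0) (hβ : ∀ e < Nβ, β e w = 0)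
    (hFι : ∀ a b, b < N → Fι a b = 0) :
    IsLowerTruncated₂ fun a b => β b (αm a w) :=
  ⟨min Nm (min Nβ (N + Nβ)), fun a b hab => by
    dsimp only
    rcases hab with h | h
    · rw [hαm a (by omega), map_zero]
    · have hcomm := hrel a b w
      rwa [hβ b (by omega), map_zero, zero_sub,
        show (∑ᶠ e, Fι a (b - e) • β e w) = mulSnd Fι (fun e => β e w) a b from rfl,
        mulSnd_eq_zero_of_lt hFι hβ (by omega), neg_eq_zero] at hcomm⟩

lemma seriesMul_apply_zero (F : ℤ → ℕ → ℂ) (G : ℤ → ℕ → W) (x : ℤ) :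
    seriesMul F G x 0 = ∑ᶠ a', F a' 0 • G (x - a') 0 := by
  simp [seriesMul]

lemma seriesMul_substExp_apply_zero (F : ℤ → ℕ → ℂ) (G : ℤ → ℤ → W) (x : ℤ) :
    seriesMul F (substExp G) x 0 = ∑ᶠ a', F a' 0 • ∑ᶠ t, G t (x - a' - t) := by
  simp only [seriesMul_apply_zero, substExp_zero]

lemma seriesMul_substExp_embedSnd_apply_zero (F : ℤ → ℕ → ℂ) (v : ℤ → W) (x : ℤ) :
    seriesMul F (substExp (embedSnd v)) x 0 = ∑ᶠ e, F (x - e) 0 • v e := by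
  have hv : ∀ y, substExp (embedSnd v) y 0 = v y := fun y => by
    rw [substExp_zero, finsum_eq_single _ 0 fun t ht => by simp [embedSnd, ht]]
    simp [embedSnd]
  simp only [seriesMul_apply_zero, hv]
  exact finsum_comp_sub_left (fun a e => F a 0 • v e) x

lemma substExp_normalOrdered_apply_zero {αp αm β : ℤ → Module.End ℂ W} {w : W}
    (hαpβ : IsLowerTruncated₂ fun a b => αp a (β b w))
    (hβαm : IsLowerTruncated₂ fun a b => β b (αm a w)) (x : ℤ) :
    substExp (normalOrdered αp αm β w) x 0 =
      ∑ᶠ e, αp e (β (x - e) w) + ∑ᶠ e, β e (αm (x - e) w) := by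
  rw [normalOrdered, substExp_add hαpβ hβαm, Pi.add_apply, Pi.add_apply, substExp_zero,
    substExp_zero, finsum_comp_sub_left (fun t s => β s (αm t w))]

end Fields

theorem stmt17_general
    (αp αm β : ℤ → Module.End ℂ W)
    -- field properties
    (hαmfield : ∀ w : W, ∃ N : ℤ, ∀ e < N, αm e w = 0)
    (hβfield : ∀ w : W, ∃ N : ℤ, ∀ e < N, β e w = 0)
    (hαp : ∀ e : ℤ, e < 0 → αp e = 0)
    -- the rational function f = p/q and its two expansions
    (p q : ℤ → ℤ → ℂ)
    (hpfin : (Function.support fun x : ℤ × ℤ => p x.1 x.2).Finite)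
    (hqfin : (Function.support fun x : ℤ × ℤ => q x.1 x.2).Finite)
    (hpnn : ∀ i j : ℤ, (i < 0 ∨ j < 0) → p i j = 0)
    (hqnn : ∀ i j : ℤ, (i < 0 ∨ j < 0) → q i j = 0)
    (hqne : ∃ i j : ℤ, q i j ≠ 0)
    (Fι : ℤ → ℤ → ℂ)
    (hFιsupp : ∃ M : ℕ, ∀ a b : ℤ, ((M : ℤ) < a ∨ b < -(M : ℤ)) → Fι a b = 0)
    (hFι : ∀ d₁ d₂ : ℤ, ∑ᶠ (i : ℤ) (j : ℤ), q i j * Fι (d₁ - i) (d₂ - j) = p d₁ d₂)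
    (Fφ : ℤ → ℕ → ℂ)
    (hFφsupp : ∀ c : ℕ, ∃ N : ℤ, ∀ a < N, Fφ a c = 0)
    (hFφ : ∀ (a : ℤ) (c : ℕ),
      ∑ c' ∈ Finset.range (c + 1), ∑ᶠ a' : ℤ, substCoeff q a' c' * Fφ (a - a') (c - c')
        = substCoeff p a c)
    -- the commutation relation [α⁻(z₁), β(z₂)] = β(z₂)·ι_{z₁,z₂}f(z₁,z₂)
    (hrel : ∀ (e₁ e₂ : ℤ) (w : W),
      αm e₁ (β e₂ w) - β e₂ (αm e₁ w) = ∑ᶠ e : ℤ, Fι e₁ (e₂ - e) • β e w)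
    -- quasi-compatibility: h(z₁,z₂)α(z₁)β(z₂) ∈ E^{(2)}(W) for a nonzero polynomial h
    (h : ℤ → ℤ → ℂ)
    (hhfin : (Function.support fun x : ℤ × ℤ => h x.1 x.2).Finite)
    (hhnn : ∀ i j : ℤ, (i < 0 ∨ j < 0) → h i j = 0)
    (hE2 : ∀ w : W, ∃ N : ℤ, ∀ a b : ℤ, (a < N ∨ b < N) →
      prodCoeff h (fun e => αp e + αm e) β a b w = 0)
    -- the expansion ι_{z,z₀} h(ze^{z₀}, z)⁻¹
    (Hinv : ℤ → ℕ → ℂ)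
    (hHinvsupp : ∀ c : ℕ, ∃ N : ℤ, ∀ a < N, Hinv a c = 0)
    (hHinv : ∀ (a : ℤ) (c : ℕ),
      ∑ c' ∈ Finset.range (c + 1), ∑ᶠ a' : ℤ, Hinv a' c' * substCoeff h (a - a') (c - c')
        = if a = 0 ∧ c = 0 then 1 else 0) :
    ∀ (r : ℤ) (w : W),
      (∑ᶠ a' : ℤ, Hinv a' 0 •
          (∑ᶠ a : ℤ, prodCoeff h (fun e => αp e + αm e) β a (r - a' - a) w))
        = (∑ᶠ e : ℤ, αp e (β (r - e) w)) + (∑ᶠ e : ℤ, β e (αm (r - e) w))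
          + ∑ᶠ e : ℤ, Fφ (r - e) 0 • β e w := by
  intro r w
  obtain ⟨M, hM⟩ := hFιsupp
  obtain ⟨Nβ, hβ⟩ := hβfield w
  obtain ⟨Nm, hαm⟩ := hαmfield w
  have hFιlow : ∀ a b, b < -(M : ℤ) → Fι a b = 0 := fun a b hb => hM a b (Or.inr hb)
  have hαpβ := isLowerTruncated₂_apply_apply (w := w) hαp hβ
  have hβαm := isLowerTruncated₂_apply_apply_of_commutator hrel hαm hβ hFιlow
  have hN : IsLowerTruncated₂ (normalOrdered αp αm β w) := hαpβ.add hβαm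
  have hsplit : (fun a b => prodCoeff h (fun e => αp e + αm e) β a b w) =
      polyMul h (normalOrdered αp αm β w) + polyMul h (mulSnd Fι fun e => β e w) := by
    rw [prodCoeff_eq_polyMul αp hrel h w, polyMul_add hhfin]
  have hhG : IsLowerTruncated₂ (polyMul h (mulSnd Fι fun e => β e w)) := by
    have := (show IsLowerTruncated₂ _ from hE2 w).sub (hN.polyMul hhnn)
    rwa [hsplit, add_sub_cancel_left] at this
  have hGE : polyMul q (mulSnd Fι fun e => β e w) = polyMul p (embedSnd fun e => β e w) := by
    rw [polyMul_mulSnd hqfin hFιlow hβ, polyMul_embedSnd, show polyMul q Fι = p from funext₂ hFι]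
  have hinv : seriesMul Hinv (substCoeff h) = seriesOne := funext₂ hHinv
  calc _ = seriesMul Hinv (substExp (polyMul h (normalOrdered αp αm β w) +
          polyMul h (mulSnd Fι fun e => β e w))) r 0 := by
        rw [← hsplit, seriesMul_substExp_apply_zero]
    _ = substExp (normalOrdered αp αm β w) r 0 +
          seriesMul Fφ (substExp (embedSnd fun e => β e w)) r 0 := by
        rw [substExp_add (hN.polyMul hhnn) hhG,
          seriesMul_add hHinvsupp (hN.polyMul hhnn).substExp hhG.substExp, Pi.add_apply,
          Pi.add_apply, seriesMul_substExp_polyMul_of_inv hhfin hhnn hHinvsupp hinv hN,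
          seriesMul_substExp_polyMul_eq_of_polyMul_eq hhfin hhnn hHinvsupp hinv hpfin hpnn hqfin
            hqnn hqne hFφsupp (funext₂ hFφ) hhG (isLowerTruncated₂_embedSnd hβ) hGE]
    _ = _ := by
        rw [substExp_normalOrdered_apply_zero hαpβ hβαm, seriesMul_substExp_embedSnd_apply_zero]

/-- Let `φ(x,z) = xe^z`, and let `α⁺(z), α⁻(z), β(z)` be fields on `W` (written here as
`α⁺(z) = ∑ αp e z^e` etc.) such that `[α^±(z₁),α^±(z₂)] = 0`, `α⁺(z) ∈ Hom(W,W[[z]])`,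
and `[α⁻(z₁), β(z₂)] = β(z₂)·ι_{z₁,z₂}f(z₁,z₂)` for a rational function
`f = p/q ∈ ℂ(z₁,z₂)`, encoded by its `ι_{z₁,z₂}`-expansion `Fι` and by the
`ι_{z,z₀}`-expansion `Fφ` of `f(ze^{z₀},z)`.  Assume the pair `(α,β)` (with
`α = α⁺ + α⁻`) is quasi-compatible: `h(z₁,z₂)α(z₁)β(z₂) ∈ E^{(2)}(W)` for a nonzero
polynomial `h`, whose inverse expansion `ι_{z,z₀}h(ze^{z₀},z)⁻¹` is encoded by `Hinv`.
Then the `(-1)`-st `φ`-product satisfies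
`α(z)₋₁^φ β(z) = α⁺(z)β(z) + β(z)α⁻(z) + β(z)·Res_{z₀} z₀⁻¹ ι_{z,z₀} f(φ(z,z₀),z)`,
written out coefficientwise in the conclusion below (the left-hand side being the
coefficient of `z^r` in `Res_{z₀} z₀⁻¹ ι_{z,z₀}h(φ(z,z₀),z)⁻¹·(h(z₁,z)α(z₁)β(z))|_{z₁=φ(z,z₀)}`). -/
theorem stmt17
    (αp αm β : ℤ → Module.End ℂ W)
    -- field properties
    (hαmfield : ∀ w : W, ∃ N : ℤ, ∀ e < N, αm e w = 0)
    (hβfield : ∀ w : W, ∃ N : ℤ, ∀ e < N, β e w = 0)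
    (hαp : ∀ e : ℤ, e < 0 → αp e = 0)
    -- [α^±(z₁), α^±(z₂)] = 0
    (hcp : ∀ e₁ e₂ : ℤ, αp e₁ * αp e₂ = αp e₂ * αp e₁)
    (hcm : ∀ e₁ e₂ : ℤ, αm e₁ * αm e₂ = αm e₂ * αm e₁)
    -- the rational function f = p/q and its two expansions
    (p q : ℤ → ℤ → ℂ)
    (hpfin : (Function.support fun x : ℤ × ℤ => p x.1 x.2).Finite)
    (hqfin : (Function.support fun x : ℤ × ℤ => q x.1 x.2).Finite)
    (hpnn : ∀ i j : ℤ, (i < 0 ∨ j < 0) → p i j = 0)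
    (hqnn : ∀ i j : ℤ, (i < 0 ∨ j < 0) → q i j = 0)
    (hqne : ∃ i j : ℤ, q i j ≠ 0)
    (Fι : ℤ → ℤ → ℂ)
    (hFιsupp : ∃ M : ℕ, ∀ a b : ℤ, ((M : ℤ) < a ∨ b < -(M : ℤ)) → Fι a b = 0)
    (hFι : ∀ d₁ d₂ : ℤ, ∑ᶠ (i : ℤ) (j : ℤ), q i j * Fι (d₁ - i) (d₂ - j) = p d₁ d₂)
    (Fφ : ℤ → ℕ → ℂ)
    (hFφsupp : ∀ c : ℕ, ∃ N : ℤ, ∀ a < N, Fφ a c = 0)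
    (hFφ : ∀ (a : ℤ) (c : ℕ),
      ∑ c' ∈ Finset.range (c + 1), ∑ᶠ a' : ℤ, substCoeff q a' c' * Fφ (a - a') (c - c')
        = substCoeff p a c)
    -- the commutation relation [α⁻(z₁), β(z₂)] = β(z₂)·ι_{z₁,z₂}f(z₁,z₂)
    (hrel : ∀ (e₁ e₂ : ℤ) (w : W),
      αm e₁ (β e₂ w) - β e₂ (αm e₁ w) = ∑ᶠ e : ℤ, Fι e₁ (e₂ - e) • β e w)
    -- quasi-compatibility: h(z₁,z₂)α(z₁)β(z₂) ∈ E^{(2)}(W) for a nonzero polynomial h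
    (h : ℤ → ℤ → ℂ)
    (hhfin : (Function.support fun x : ℤ × ℤ => h x.1 x.2).Finite)
    (hhnn : ∀ i j : ℤ, (i < 0 ∨ j < 0) → h i j = 0)
    (hhne : ∃ i j : ℤ, h i j ≠ 0)
    (hE2 : ∀ w : W, ∃ N : ℤ, ∀ a b : ℤ, (a < N ∨ b < N) →
      prodCoeff h (fun e => αp e + αm e) β a b w = 0)
    -- the expansion ι_{z,z₀} h(ze^{z₀}, z)⁻¹
    (Hinv : ℤ → ℕ → ℂ)
    (hHinvsupp : ∀ c : ℕ, ∃ N : ℤ, ∀ a < N, Hinv a c = 0)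
    (hHinv : ∀ (a : ℤ) (c : ℕ),
      ∑ c' ∈ Finset.range (c + 1), ∑ᶠ a' : ℤ, Hinv a' c' * substCoeff h (a - a') (c - c')
        = if a = 0 ∧ c = 0 then 1 else 0) :
    ∀ (r : ℤ) (w : W),
      (∑ᶠ a' : ℤ, Hinv a' 0 •
          (∑ᶠ a : ℤ, prodCoeff h (fun e => αp e + αm e) β a (r - a' - a) w))
        = (∑ᶠ e : ℤ, αp e (β (r - e) w)) + (∑ᶠ e : ℤ, β e (αm (r - e) w))
          + ∑ᶠ e : ℤ, Fφ (r - e) 0 • β e w :=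
  stmt17_general αp αm β hαmfield hβfield hαp p q hpfin hqfin hpnn hqnn hqne Fι hFιsupp hFι Fφ
    hFφsupp hFφ hrel h hhfin hhnn hE2 Hinv hHinvsupp hHinv
end
end

section
/- Let G be a group with two characters χ, χ_φ: G → ℂ^× and let φ(x,z) = exp(z p(x) d/dx)·x for some nonzero p(x) ∈ ℂ((x)). If the compatibility condition φ(z, χ(g)z₀) = χ_φ(g)·φ(χ_φ(g)⁻¹z, z₀) holds for all g ∈ G, then equivalently p(χ_φ(g)z) = χ(g)⁻¹χ_φ(g)·p(z) for all g ∈ G. In particular, when φ(x,z) = xe^z (i.e., p(x) = x), the compatibility condition forces χ to be the trivial character. -/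
open scoped BigOperators

/-!
Invariance of `φ` under `(x, z) ↦ (χ_φ(g)⁻¹x, χ(g)z)` says that `a^k φ_k` and `c^{1-n} φ_k`
agree coefficientwise, where `a = χ(g)`, `c = χ_φ(g)`. Since `φ_1 = p`, the case `k = 1` is the
condition on `p`. Conversely, if `p` has this homogeneity then the recursion
`(k+1) φ_{k+1} = p·φ_k'` propagates it from `φ_0 = x` to every `φ_k`, because the weights are
multiplicative: `c^{1-m} · c^{1-(n-m+1)} = c^{1-n}`. For `p = x` the condition at `n = 1`
reads `a = 1`.
-/

/-- `φ k n` is the coefficient of `x^n z^k` in `exp(z p(x) d/dx)·x`, and `p n` that of `x^n`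
in `p`. -/
structure IsExpFlowCoeffs {R : Type*} [CommRing R] (p : ℤ → R) (φ : ℕ → ℤ → R) : Prop where
  zero : ∀ n : ℤ, φ 0 n = if n = 1 then 1 else 0
  succ : ∀ (k : ℕ) (n : ℤ),
    ((k : R) + 1) * φ (k + 1) n = ∑ᶠ m : ℤ, p m * (((n - m + 1 : ℤ) : R) * φ k (n - m + 1))

namespace IsExpFlowCoeffs

theorem one_eq {R : Type*} [CommRing R] {p : ℤ → R} {φ : ℕ → ℤ → R} (hφ : IsExpFlowCoeffs p φ)
    (n : ℤ) : φ 1 n = p n := by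
  have h := hφ.succ 0 n
  rw [finsum_eq_single _ n fun m hm => by simp [hφ.zero, show n - m + 1 ≠ 1 by omega]] at h
  simpa [hφ.zero] using h

variable {K : Type*} [Field K] [CharZero K] {p : ℤ → K} {φ : ℕ → ℤ → K} {a c : K}

theorem homogeneous (hφ : IsExpFlowCoeffs p φ) (hc : c ≠ 0)
    (hp : ∀ m : ℤ, a * p m = c ^ (1 - m) * p m) (k : ℕ) (n : ℤ) :
    a ^ k * φ k n = c ^ (1 - n) * φ k n := by
  induction k generalizing n with
  | zero =>
    rw [hφ.zero]
    split_ifs with hn <;> simp [hn]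
  | succ k ih =>
    have hweight (m : ℤ) : c ^ (1 - m) * c ^ (1 - (n - m + 1)) = c ^ (1 - n) := by
      rw [← zpow_add₀ hc]
      ring_nf
    apply mul_left_cancel₀ (Nat.cast_add_one_ne_zero k : (k : K) + 1 ≠ 0)
    calc ((k : K) + 1) * (a ^ (k + 1) * φ (k + 1) n)
        = ∑ᶠ m : ℤ, (a * p m) * (((n - m + 1 : ℤ) : K) * (a ^ k * φ k (n - m + 1))) := by
          rw [mul_left_comm, hφ.succ, mul_finsum]
          exact finsum_congr fun m => by ring
      _ = ∑ᶠ m : ℤ, c ^ (1 - n) * (p m * (((n - m + 1 : ℤ) : K) * φ k (n - m + 1))) := by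
          refine finsum_congr fun m => ?_
          rw [hp, ih, ← hweight m]
          ring
      _ = ((k : K) + 1) * (c ^ (1 - n) * φ (k + 1) n) := by
          rw [← mul_finsum, ← hφ.succ]
          ring

theorem homogeneous_iff (hφ : IsExpFlowCoeffs p φ) (hc : c ≠ 0) :
    (∀ (k : ℕ) (n : ℤ), a ^ k * φ k n = c ^ (1 - n) * φ k n) ↔
      ∀ n : ℤ, a * p n = c ^ (1 - n) * p n :=
  ⟨fun H n => by simpa [hφ.one_eq] using H 1 n, hφ.homogeneous hc⟩

end IsExpFlowCoeffs

theorem mul_inv_zpow_eq_zpow_one_sub {K : Type*} [DivisionRing K] {c : K} (hc : c ≠ 0) (n : ℤ) :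
    c * c⁻¹ ^ n = c ^ (1 - n) := by
  rw [zpow_sub₀ hc, zpow_one, inv_zpow, div_eq_mul_inv]

theorem zpow_mul_eq_inv_mul_mul_iff {K : Type*} [Field K] {a c x : K} (ha : a ≠ 0) (hc : c ≠ 0)
    (n : ℤ) : c ^ n * x = a⁻¹ * c * x ↔ a * x = c ^ (1 - n) * x := by
  rcases eq_or_ne x 0 with rfl | hx
  · simp
  rw [mul_left_inj' hx, mul_left_inj' hx, zpow_sub₀ hc, zpow_one]
  have hcn : c ^ n ≠ 0 := zpow_ne_zero n hc
  constructor <;> intro h <;> field_simp at h ⊢ <;> linear_combination h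

theorem stmt19_general (G : Type*) [Group G] (χ χφ : G →* ℂˣ)
    (p : ℤ → ℂ) (φ : ℕ → ℤ → ℂ)
    (hφ0 : ∀ n : ℤ, φ 0 n = if n = 1 then 1 else 0)
    (hφrec : ∀ (k : ℕ) (n : ℤ),
      ((k : ℂ) + 1) * φ (k + 1) n = ∑ᶠ m : ℤ, p m * (((n - m + 1 : ℤ) : ℂ) * φ k (n - m + 1))) :
    ((∀ (g : G) (k : ℕ) (n : ℤ),
        ((χ g : ℂ)) ^ k * φ k n = (χφ g : ℂ) * ((χφ g : ℂ)⁻¹) ^ n * φ k n)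
      ↔ (∀ (g : G) (n : ℤ), ((χφ g : ℂ)) ^ n * p n = ((χ g : ℂ))⁻¹ * (χφ g : ℂ) * p n)) ∧
    ((∀ n : ℤ, p n = if n = 1 then 1 else 0) →
      (∀ (g : G) (k : ℕ) (n : ℤ),
        ((χ g : ℂ)) ^ k * φ k n = (χφ g : ℂ) * ((χφ g : ℂ)⁻¹) ^ n * φ k n) →
      ∀ g : G, χ g = 1) := by
  have hφ : IsExpFlowCoeffs p φ := ⟨hφ0, hφrec⟩
  have hweight (g : G) (n : ℤ) : (χφ g : ℂ) * (χφ g : ℂ)⁻¹ ^ n = (χφ g : ℂ) ^ (1 - n) :=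
    mul_inv_zpow_eq_zpow_one_sub (χφ g).ne_zero n
  have hp_iff (g : G) (n : ℤ) :=
    zpow_mul_eq_inv_mul_mul_iff (x := p n) (χ g).ne_zero (χφ g).ne_zero n
  simp only [hweight, hp_iff]
  have hcompat_iff :
      (∀ (g : G) (k : ℕ) (n : ℤ), (χ g : ℂ) ^ k * φ k n = (χφ g : ℂ) ^ (1 - n) * φ k n) ↔
        ∀ (g : G) (n : ℤ), (χ g : ℂ) * p n = (χφ g : ℂ) ^ (1 - n) * p n :=
    forall_congr' fun g => hφ.homogeneous_iff (χφ g).ne_zero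
  refine ⟨hcompat_iff, fun hδ H g => Units.val_eq_one.mp ?_⟩
  simpa [hδ] using hcompat_iff.mp H g 1

/-- Let `G` be a group with characters `χ, χ_φ : G → ℂˣ`, let `p(x) = ∑ p n x^n` be a
nonzero Laurent series, and let `φ(x,z) = exp(z p(x) d/dx)·x = ∑_k φ_k(x) z^k`, encoded by
`φ 0 = x` and `(k+1) φ_{k+1} = p·(φ_k)'`.  If the compatibility condition
`φ(x, χ(g)z) = χ_φ(g)·φ(χ_φ(g)⁻¹x, z)` holds (coefficientwise) for all `g ∈ G`, then
equivalently `p(χ_φ(g)x) = χ(g)⁻¹χ_φ(g)·p(x)` for all `g`.  In particular, when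
`p(x) = x` (i.e. `φ(x,z) = x e^z`), the compatibility condition forces `χ` to be trivial. -/
theorem stmt19 (G : Type*) [Group G] (χ χφ : G →* ℂˣ)
    (p : ℤ → ℂ) (hp : p ≠ 0) (hpsupp : ∃ N : ℤ, ∀ n < N, p n = 0)
    (φ : ℕ → ℤ → ℂ)
    (hφsupp : ∀ k : ℕ, ∃ N : ℤ, ∀ n < N, φ k n = 0)
    (hφ0 : ∀ n : ℤ, φ 0 n = if n = 1 then 1 else 0)
    (hφrec : ∀ (k : ℕ) (n : ℤ),
      ((k : ℂ) + 1) * φ (k + 1) n = ∑ᶠ m : ℤ, p m * (((n - m + 1 : ℤ) : ℂ) * φ k (n - m + 1))) :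
    ((∀ (g : G) (k : ℕ) (n : ℤ),
        ((χ g : ℂ)) ^ k * φ k n = (χφ g : ℂ) * ((χφ g : ℂ)⁻¹) ^ n * φ k n)
      ↔ (∀ (g : G) (n : ℤ), ((χφ g : ℂ)) ^ n * p n = ((χ g : ℂ))⁻¹ * (χφ g : ℂ) * p n)) ∧
    ((∀ n : ℤ, p n = if n = 1 then 1 else 0) →
      (∀ (g : G) (k : ℕ) (n : ℤ),
        ((χ g : ℂ)) ^ k * φ k n = (χφ g : ℂ) * ((χφ g : ℂ)⁻¹) ^ n * φ k n) →
      ∀ g : G, χ g = 1) :=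
  stmt19_general G χ χφ p φ hφ0 hφrec
end
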